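/- arXiv:2006.01041 — 9 statements merged into one kernel-verified Lean document; each statement's English description precedes it below -/
import Mathlib

section
/- Let A be a finite set of integers with minimum element 0, maximum element b, and gcd of its elements equal to 1. Then for every a with 1 ≤ a ≤ b−1, one has N_{a,A} ≤ b − 1. -/
open Pointwise

/-- The `N`-fold sumset of a finite set `A` (sums of `N` not-necessarily-distinct elements),
with the `0`-fold sumset being `{0}`. -/
def nfold {α : Type*} [AddMonoid α] [DecidableEq α] (A : Finset α) : ℕ → Finset α
  | 0 => {0}
  | n + 1 => nfold A n + A

/-- `postP A` is the set of integers expressible as a finite (nonempty) sum of elements of `A`. -/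
def postP (A : Finset ℤ) : Set ℤ := {n | ∃ N : ℕ, 1 ≤ N ∧ n ∈ nfold A N}

/-- The exceptional set `E(A)`. -/
def postE (A : Finset ℤ) : Set ℤ := {n | 1 ≤ n ∧ n ∉ postP A}

/-- `n_{a,A}`: the least `n ≥ 1` with `n ∈ P(A)` and `n ≡ a (mod b)`. -/
noncomputable def nmin (A : Finset ℤ) (b a : ℤ) : ℤ :=
  sInf {n : ℤ | 1 ≤ n ∧ n ∈ postP A ∧ n % b = a % b}

/-- `N_{a,A}`: the least `N ≥ 1` with `n_{a,A} ∈ NA`. -/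
noncomputable def Nmin (A : Finset ℤ) (b a : ℤ) : ℕ :=
  sInf {N : ℕ | 1 ≤ N ∧ nmin A b a ∈ nfold A N}

/-- `N_A^* = max_{1 ≤ a ≤ b-1} N_{a,A}`. -/
noncomputable def Nstar (A : Finset ℤ) (b : ℤ) : ℕ :=
  (Finset.Icc 1 (b - 1)).sup (fun a => Nmin A b a)

/-!
If `N = N_{a,A} ≥ b`, write `n_{a,A}` as a sum of `N` elements of `A`. Two of its `N + 1 > b`
partial sums agree modulo `b`, so deleting the block between them leaves a sum of fewer elements of
`A` that is no larger and lies in the same residue class. It is nonzero, since `b ∤ a`, so by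
minimality of `n_{a,A}` it equals `n_{a,A}`, contradicting the minimality of `N_{a,A}`.
That `n_{a,A}` exists at all follows from `gcd A = 1`: every large integer lies in `P(A)`.
-/

lemma mem_nfold_iff {α : Type*} [AddMonoid α] [DecidableEq α] {A : Finset α} {N : ℕ} {n : α} :
    n ∈ nfold A N ↔ ∃ l : List α, l.length = N ∧ (∀ x ∈ l, x ∈ A) ∧ l.sum = n := by
  induction N generalizing n with
  | zero => simp [nfold, eq_comm]
  | succ N ih =>
    simp only [nfold, Finset.mem_add, ih]
    constructor
    · rintro ⟨_, ⟨l, rfl, hl, rfl⟩, z, hz, rfl⟩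
      exact ⟨l ++ [z], by simp, by simpa [or_imp, forall_and] using ⟨hl, hz⟩, by simp⟩
    · rintro ⟨l, hlen, hl, rfl⟩
      obtain ⟨l, z, rfl⟩ := (List.eq_nil_or_concat' l).resolve_left (by rintro rfl; simp at hlen)
      exact ⟨l.sum, ⟨l, by simpa using hlen, fun x hx => hl x (by simp [hx]), rfl⟩,
        z, hl z (by simp), by simp⟩

lemma nonneg_of_mem_nfold {A : Finset ℤ} (hA : ∀ x ∈ A, 0 ≤ x) {N : ℕ} {n : ℤ}
    (hn : n ∈ nfold A N) : 0 ≤ n := by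
  obtain ⟨l, -, hl, rfl⟩ := mem_nfold_iff.1 hn
  exact List.sum_nonneg fun x hx => hA x (hl x hx)

lemma List.sum_mem_postP {A : Finset ℤ} {l : List ℤ} (hl : ∀ x ∈ l, x ∈ A) (hsum : l.sum ≠ 0) :
    l.sum ∈ postP A := by
  refine ⟨l.length, ?_, mem_nfold_iff.2 ⟨l, rfl, hl, rfl⟩⟩
  rcases l with _ | _ <;> simp_all

lemma exists_forall_ge_mem_postP {A : Finset ℤ} (hA : ∀ x ∈ A, 0 ≤ x) (hgcd : A.gcd id = 1) :
    ∃ n₀ : ℤ, ∀ n ≥ n₀, 1 ≤ n → n ∈ postP A := by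
  set s : Set ℕ := {k | (k : ℤ) ∈ A}
  have hs : Nat.setGcd s = 1 := by
    have : (Nat.setGcd s : ℤ) ∣ A.gcd id := Finset.dvd_gcd fun x hx => by
      lift x to ℕ using hA x hx
      exact Int.natCast_dvd_natCast.2 (Nat.setGcd_dvd_of_mem hx)
    rw [hgcd] at this
    exact_mod_cast Int.eq_one_of_dvd_one (by positivity) this
  obtain ⟨n₀, hn₀⟩ := Nat.exists_mem_closure_of_ge s
  refine ⟨n₀, fun n hn h1 => ?_⟩
  lift n to ℕ using (by omega)
  obtain ⟨l, hl, rfl⟩ := AddSubmonoid.exists_list_of_mem_closure (hn₀ n (by omega) (by simp [hs]))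
  have hlA : ∀ x ∈ l.map ((↑) : ℕ → ℤ), x ∈ A := by
    simp only [List.mem_map]
    rintro _ ⟨k, hk, rfl⟩
    exact hl k hk
  simpa using List.sum_mem_postP hlA (by rw [← Nat.cast_list_sum]; omega)

lemma List.exists_eq_append_append_dvd_sum (l : List ℤ) {b : ℤ} (hb : 0 < b)
    (hl : b ≤ l.length) :
    ∃ l₁ l₂ l₃ : List ℤ, l = l₁ ++ l₂ ++ l₃ ∧ l₂ ≠ [] ∧ b ∣ l₂.sum := by
  have hcard : (Finset.Ico 0 b).card < (Finset.range (l.length + 1)).card := by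
    rw [Finset.card_range, Int.card_Ico]
    omega
  have hmaps : Set.MapsTo (fun i => (l.take i).sum % b) (Finset.range (l.length + 1))
      (Finset.Ico 0 b) := fun i _ => by
    simpa using ⟨Int.emod_nonneg _ hb.ne', Int.emod_lt_of_pos _ hb⟩
  obtain ⟨i, hi, j, hj, hij, hmod⟩ := Finset.exists_ne_map_eq_of_card_lt_of_maps_to hcard hmaps
  wlog hlt : i < j generalizing i j
  · exact this j hj i hi hij.symm hmod.symm (by omega)
  simp only [Finset.mem_range] at hi hj
  obtain ⟨k, rfl⟩ := Nat.exists_eq_add_of_lt hlt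
  refine ⟨l.take i, (l.drop i).take (k + 1), (l.drop i).drop (k + 1), by simp, ?_, ?_⟩
  · simp only [ne_eq, List.take_eq_nil_iff, List.drop_eq_nil_iff]
    omega
  · have := Int.ModEq.dvd (n := b) hmod
    rwa [add_assoc, List.take_add, List.sum_append, add_sub_cancel_left] at this

lemma exists_lt_mem_nfold_le_modEq {A : Finset ℤ} (hA : ∀ x ∈ A, 0 ≤ x) {b : ℤ} (hb : 0 < b)
    {N : ℕ} (hN : b ≤ N) {n : ℤ} (hn : n ∈ nfold A N) :
    ∃ M < N, ∃ m ∈ nfold A M, m ≤ n ∧ m ≡ n [ZMOD b] := by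
  obtain ⟨l, rfl, hlA, rfl⟩ := mem_nfold_iff.1 hn
  obtain ⟨l₁, l₂, l₃, rfl, hne, hdvd⟩ := l.exists_eq_append_append_dvd_sum hb hN
  have hlA' : ∀ x ∈ l₁ ++ l₃, x ∈ A := fun x hx => hlA x (by simp at hx ⊢; tauto)
  have hsum : 0 ≤ l₂.sum := List.sum_nonneg fun x hx => hA x (hlA x (by simp [hx]))
  refine ⟨(l₁ ++ l₃).length, ?_, _, mem_nfold_iff.2 ⟨_, rfl, hlA', rfl⟩, ?_, ?_⟩
  · simpa using List.length_pos_iff.2 hne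
  · simp only [List.sum_append]
    omega
  · exact Int.modEq_iff_dvd.2 (by simpa [List.sum_append, add_sub_cancel_left] using hdvd)

section Minimal

variable {A : Finset ℤ} {b a : ℤ}

lemma nmin_le {n : ℤ} (hn1 : 1 ≤ n) (hn : n ∈ postP A) (hna : n % b = a % b) : nmin A b a ≤ n :=
  csInf_le ⟨1, fun _ h => h.1⟩ ⟨hn1, hn, hna⟩

lemma nmin_spec (h : ∃ n, 1 ≤ n ∧ n ∈ postP A ∧ n % b = a % b) :
    1 ≤ nmin A b a ∧ nmin A b a ∈ postP A ∧ nmin A b a % b = a % b :=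
  Int.csInf_mem h ⟨1, fun _ h => h.1⟩

lemma Nmin_le {N : ℕ} (hN : 1 ≤ N) (h : nmin A b a ∈ nfold A N) : Nmin A b a ≤ N :=
  Nat.sInf_le ⟨hN, h⟩

lemma Nmin_spec (h : nmin A b a ∈ postP A) : 1 ≤ Nmin A b a ∧ nmin A b a ∈ nfold A (Nmin A b a) :=
  Nat.sInf_mem h

end Minimal

lemma exists_mem_postP_emod_eq {A : Finset ℤ} (hA : ∀ x ∈ A, 0 ≤ x) (hgcd : A.gcd id = 1)
    {b : ℤ} (hb : 0 < b) (a : ℤ) : ∃ n, 1 ≤ n ∧ n ∈ postP A ∧ n % b = a % b := by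
  obtain ⟨n₀, hn₀⟩ := exists_forall_ge_mem_postP hA hgcd
  set k := 1 + |a| + |n₀|
  have hk : k ≤ b * k := le_mul_of_one_le_left (by positivity) hb
  have hak : 1 + |n₀| ≤ a + k := by linarith [neg_abs_le a]
  refine ⟨a + b * k, ?_, hn₀ _ ?_ ?_, Int.add_mul_emod_self_left _ _ _⟩ <;>
    linarith [abs_nonneg n₀, le_abs_self n₀]

theorem stmt3_general (A : Finset ℤ) (b : ℤ)
    (hmin : ∀ a ∈ A, 0 ≤ a)
    (hgcd : A.gcd id = 1)
    (a : ℤ) (ha1 : 1 ≤ a) (ha2 : a ≤ b - 1) :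
    (Nmin A b a : ℤ) ≤ b - 1 := by
  have hb : 0 < b := by omega
  obtain ⟨-, hnP, hna⟩ := nmin_spec (exists_mem_postP_emod_eq hmin hgcd hb a)
  obtain ⟨-, hnN⟩ := Nmin_spec hnP
  by_contra! hbN
  obtain ⟨M, hMN, m, hm, hmn, hmod⟩ := exists_lt_mem_nfold_le_modEq hmin hb (by omega) hnN
  have hma : m % b = a % b := hmod.trans hna
  have hm0 : m ≠ 0 := by
    rintro rfl
    rw [Int.zero_emod, Int.emod_eq_of_lt (by omega) (by omega)] at hma
    omega
  have hM0 : M ≠ 0 := by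
    rintro rfl
    exact hm0 (Finset.mem_singleton.1 hm)
  have hm1 : 1 ≤ m := by
    have := nonneg_of_mem_nfold hmin hm
    omega
  have hmn' : m = nmin A b a := le_antisymm hmn (nmin_le hm1 ⟨M, by omega, hm⟩ hma)
  rw [hmn'] at hm
  have := Nmin_le (by omega) hm
  omega

theorem stmt3 (A : Finset ℤ) (b : ℤ)
    (h0 : 0 ∈ A) (hb : b ∈ A)
    (hmin : ∀ a ∈ A, 0 ≤ a) (hmax : ∀ a ∈ A, a ≤ b)
    (hgcd : A.gcd id = 1)
    (a : ℤ) (ha1 : 1 ≤ a) (ha2 : a ≤ b - 1) :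
    (Nmin A b a : ℤ) ≤ b - 1 :=
  stmt3_general A b hmin hgcd a ha1 ha2
end

section
/- Let A be a finite set of integers with minimum element 0, maximum element b, and gcd of its elements equal to 1, let ℓ := |A| − 2 satisfy ℓ ≥ 2, and let B be the image of A in ℤ/bℤ. Then for every k ≥ 2, |kB| ≥ min(b, |(k−1)B| + 2). -/
open Pointwise
set_option linter.unusedSectionVars false

section Key

variable {G : Type*} [AddCommGroup G] [Fintype G] [DecidableEq G]

lemma image_add_self {S : Finset G} {g : G} (h : ∀ s ∈ S, s + g ∈ S) :
    S.image (· + g) = S := by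
  apply Finset.eq_of_subset_of_card_le
  · intro t ht
    obtain ⟨s, hs, rfl⟩ := Finset.mem_image.1 ht
    exact h s hs
  · rw [Finset.card_image_of_injective _ (add_left_injective g)]

lemma mem_of_add_mem' {S : Finset G} {g : G} (h : ∀ s ∈ S, s + g ∈ S) {t : G}
    (ht : t + g ∈ S) : t ∈ S := by
  rw [← image_add_self h] at ht
  obtain ⟨s, hs, hst⟩ := Finset.mem_image.1 ht
  have : s = t := add_left_injective g hst
  exact this ▸ hs

lemma stab_all {B S : Finset G} (hcl : AddSubgroup.closure (B : Set G) = ⊤)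
    (hB : ∀ β ∈ B, ∀ s ∈ S, s + β ∈ S) : ∀ g : G, ∀ s ∈ S, s + g ∈ S := by
  intro g
  have hg : g ∈ AddSubgroup.closure (B : Set G) := hcl ▸ AddSubgroup.mem_top g
  refine AddSubgroup.closure_induction (fun x hx => hB x hx) (by simp)
    (fun x y _ _ px py s hs => ?_) (fun x _ px s hs => ?_) hg
  · rw [← add_assoc]; exact py _ (px s hs)
  · exact mem_of_add_mem' px (by rwa [neg_add_cancel_right])

lemma key_lemma (B S : Finset G) (h0 : 0 ∈ B) (hB3 : 3 ≤ B.card)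
    (hcl : AddSubgroup.closure (B : Set G) = ⊤) (hSne : S.Nonempty) :
    min (Fintype.card G) (S.card + 2) ≤ (S + B).card := by
  by_contra hlt
  push_neg at hlt
  rw [lt_min_iff] at hlt
  obtain ⟨hlt1, hlt2⟩ := hlt
  set T := S + B with hT
  have hST : S ⊆ T := fun s hs => Finset.mem_add.2 ⟨s, hs, 0, h0, add_zero s⟩
  have f1 : ∀ β ∈ B, ∀ s ∈ S, s + β ∈ T := fun β hβ s hs =>
    Finset.mem_add.2 ⟨s, hs, β, hβ, rfl⟩
  have hScard := Finset.card_le_card hST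
  by_cases hcase : T.card = S.card
  · have hTS : T = S := (Finset.eq_of_subset_of_card_le hST (le_of_eq hcase)).symm
    have hall : ∀ g : G, ∀ s ∈ S, s + g ∈ S :=
      stab_all hcl (fun β hβ s hs => hTS ▸ f1 β hβ s hs)
    obtain ⟨s₀, hs₀⟩ := hSne
    have hU : S = Finset.univ := Finset.eq_univ_of_forall fun t => by
      have := hall (t - s₀) s₀ hs₀; rwa [add_sub_cancel] at this
    rw [hTS, hU, Finset.card_univ] at hlt1
    omega
  · have hTcard' : T.card = S.card + 1 := by omega
    obtain ⟨x, hx⟩ : ∃ x, x ∈ T \ S := by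
      have : 0 < (T \ S).card := by rw [Finset.card_sdiff_of_subset hST]; omega
      obtain ⟨x, hx⟩ := Finset.card_pos.1 this
      exact ⟨x, hx⟩
    rw [Finset.mem_sdiff] at hx
    obtain ⟨hxT, hxS⟩ := hx
    have hTeq : T = insert x S := by
      refine (Finset.eq_of_subset_of_card_le (Finset.insert_subset hxT hST) ?_).symm
      rw [Finset.card_insert_of_notMem hxS, hTcard']
    set C := Tᶜ with hC
    have hCne : C.Nonempty := by
      rw [← Finset.card_pos, Finset.card_compl]; omega
    have hxC : x ∉ C := by simp [hC, hxT]
    have hmemC : ∀ g, g ∈ C ↔ g ∉ T := fun g => Finset.mem_compl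
    have hSC : ∀ g, g ∉ S → g = x ∨ g ∈ C := by
      intro g hg
      by_cases h : g ∈ T
      · left
        rw [hTeq] at h
        exact (Finset.mem_insert.1 h).resolve_right hg
      · right; exact (hmemC g).2 h
    have f2 : ∀ β ∈ B, ∀ c ∈ C, c - β = x ∨ c - β ∈ C := by
      intro β hβ c hc
      apply hSC
      intro hmem
      have := f1 β hβ _ hmem
      rw [sub_add_cancel] at this
      exact (hmemC c).1 hc this
    -- triviality of the stabilizer of S
    have f3 : ∀ h : G, h ≠ 0 → ∃ s ∈ S, s + h ∉ S := by
      intro h hh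
      by_contra hcon
      push_neg at hcon
      obtain ⟨β, hβ, s₀, hs₀, hs₀β⟩ : ∃ β ∈ B, ∃ s ∈ S, s + β ∉ S := by
        by_contra hcon2
        push_neg at hcon2
        have hall := stab_all hcl hcon2
        obtain ⟨s₁, hs₁⟩ := hSne
        refine hxS ?_
        have := hall (x - s₁) s₁ hs₁
        rwa [add_sub_cancel] at this
      have hx0 : s₀ + β = x := by
        have h1 := f1 β hβ s₀ hs₀
        rw [hTeq] at h1
        exact (Finset.mem_insert.1 h1).resolve_right hs₀β
      have hxh : x + h ∈ T := by
        rw [← hx0, add_right_comm]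
        exact f1 β hβ _ (hcon s₀ hs₀)
      rw [hTeq] at hxh
      rcases Finset.mem_insert.1 hxh with h1 | h1
      · exact hh (by rwa [add_eq_left] at h1)
      · exact hxS (mem_of_add_mem' hcon h1)
    -- triviality of the stabilizer of C
    have f4 : ∀ h : G, h ≠ 0 → ∃ c ∈ C, c + h ∉ C := by
      intro h hh
      by_contra hcon
      push_neg at hcon
      obtain ⟨β, hβ, c₀, hc₀, hc₀β⟩ : ∃ β ∈ B, ∃ c ∈ C, c - β ∉ C := by
        by_contra hcon2
        push_neg at hcon2
        have hplus : ∀ β ∈ B, ∀ c ∈ C, c + β ∈ C := by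
          intro β hβ c hc
          have hminus : ∀ c' ∈ C, c' + (-β) ∈ C := fun c' hc' => by
            simpa [sub_eq_add_neg] using hcon2 β hβ c' hc'
          exact mem_of_add_mem' hminus (by rwa [add_neg_cancel_right])
        have hall := stab_all hcl hplus
        obtain ⟨c₁, hc₁⟩ := hCne
        refine hxC ?_
        have := hall (x - c₁) c₁ hc₁
        rwa [add_sub_cancel] at this
      have hxc : c₀ - β = x := (f2 β hβ c₀ hc₀).resolve_right hc₀β
      have hch : c₀ - h ∈ C := mem_of_add_mem' hcon (by rwa [sub_add_cancel])
      have hxh : (c₀ - h) - β = x - h := by rw [← hxc, sub_right_comm]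
      rcases f2 β hβ _ hch with h1 | h1
      · rw [hxh] at h1
        exact hh (by rwa [sub_eq_self] at h1)
      · rw [hxh] at h1
        have := hcon _ h1
        rw [sub_add_cancel] at this
        exact hxC this
    -- two distinct nonzero elements of B
    obtain ⟨β, hβm, γ, hγm, hβγ⟩ : ∃ β ∈ B.erase 0, ∃ γ ∈ B.erase 0, β ≠ γ := by
      refine Finset.one_lt_card.1 ?_
      rw [Finset.card_erase_of_mem h0]; omega
    rw [Finset.mem_erase] at hβm hγm
    obtain ⟨hβ0, hβB⟩ := hβm
    obtain ⟨hγ0, hγB⟩ := hγm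
    have hxrep : ∀ δ ∈ B, δ ≠ 0 → ∃ s ∈ S, s + δ = x := by
      intro δ hδ hδ0
      by_contra hcon
      push_neg at hcon
      have hsub : ∀ s ∈ S, s + δ ∈ S := by
        intro s hs
        have h1 := f1 δ hδ s hs
        rw [hTeq] at h1
        exact (Finset.mem_insert.1 h1).resolve_left (hcon s hs)
      obtain ⟨s, hs, hns⟩ := f3 δ hδ0
      exact hns (hsub s hs)
    have hxrepC : ∀ δ ∈ B, δ ≠ 0 → ∃ c ∈ C, c - δ = x := by
      intro δ hδ hδ0
      by_contra hcon
      push_neg at hcon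
      have hsub : ∀ c ∈ C, c - δ ∈ C := fun c hc =>
        (f2 δ hδ c hc).resolve_left (hcon c hc)
      have hminus : ∀ c' ∈ C, c' + (-δ) ∈ C := fun c' hc' => by
        simpa [sub_eq_add_neg] using hsub c' hc'
      obtain ⟨c, hc, hnc⟩ := f4 δ hδ0
      exact hnc (mem_of_add_mem' hminus (by rwa [add_neg_cancel_right]))
    obtain ⟨s₁, hs₁, hs₁x⟩ := hxrep β hβB hβ0
    have h1 := f1 γ hγB s₁ hs₁
    rw [hTeq] at h1
    rcases Finset.mem_insert.1 h1 with h1x | h1S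
    · rw [← hs₁x] at h1x
      exact hβγ (add_left_cancel h1x.symm)
    · have h2 : x + γ ∈ T := by
        rw [← hs₁x, add_right_comm]
        exact f1 β hβB _ h1S
      rw [hTeq] at h2
      rcases Finset.mem_insert.1 h2 with h2x | h2S
      · exact hγ0 (by rwa [add_eq_left] at h2x)
      · obtain ⟨c₁, hc₁, hc₁x⟩ := hxrepC γ hγB hγ0
        have hxγC : x + γ ∈ C := by
          rw [← hc₁x, sub_add_cancel]; exact hc₁
        exact (hmemC _).1 hxγC (hST h2S)

end Key



lemma zero_mem_nfold {α : Type*} [AddMonoid α] [DecidableEq α] {A : Finset α}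
    (h0 : 0 ∈ A) : ∀ m, (0 : α) ∈ nfold A m
  | 0 => by simp [nfold]
  | m + 1 => Finset.mem_add.2 ⟨0, zero_mem_nfold h0 m, 0, h0, add_zero 0⟩

theorem stmt5 (b : ℕ) (A : Finset ℤ)
    (h0 : 0 ∈ A) (hb : (b : ℤ) ∈ A)
    (hmin : ∀ x ∈ A, 0 ≤ x) (hmax : ∀ x ∈ A, x ≤ (b : ℤ))
    (hgcd : A.gcd id = 1)
    (ℓ : ℕ) (hcard : A.card = ℓ + 2) (hℓ : 2 ≤ ℓ)
    (k : ℕ) (hk : 2 ≤ k) :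
    min b ((nfold (A.image (fun x : ℤ => (x : ZMod b))) (k - 1)).card + 2) ≤
      (nfold (A.image (fun x : ℤ => (x : ZMod b))) k).card := by
  have hbge : 3 ≤ b := by
    have hsub : A ⊆ Finset.Icc (0 : ℤ) (b : ℤ) := fun x hx =>
      Finset.mem_Icc.2 ⟨hmin x hx, hmax x hx⟩
    have h1 := Finset.card_le_card hsub
    rw [Int.card_Icc] at h1
    omega
  haveI : NeZero b := ⟨by omega⟩
  set B := A.image (fun x : ℤ => (x : ZMod b)) with hBdef
  have h0B : (0 : ZMod b) ∈ B := Finset.mem_image.2 ⟨0, h0, by simp⟩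
  have hb_img : (((b : ℤ) : ZMod b)) = 0 := by simp
  have hBe : B = (A.erase (b : ℤ)).image (fun x : ℤ => (x : ZMod b)) := by
    conv_lhs => rw [hBdef, ← Finset.insert_erase hb]
    rw [Finset.image_insert, hb_img, Finset.insert_eq_self]
    exact Finset.mem_image.2 ⟨0, Finset.mem_erase.2
      ⟨by exact_mod_cast (by omega : (0:ℤ) ≠ b), h0⟩, by simp⟩
  have hinj : Set.InjOn (fun x : ℤ => (x : ZMod b)) (A.erase (b : ℤ)) := by
    intro x hx y hy hxy
    simp only [Finset.coe_erase, Set.mem_diff, Finset.mem_coe] at hx hy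
    have hxb : x < b := lt_of_le_of_ne (hmax x hx.1) (by simpa using hx.2)
    have hyb : y < b := lt_of_le_of_ne (hmax y hy.1) (by simpa using hy.2)
    have hx0 := hmin x hx.1
    have hy0 := hmin y hy.1
    have hmod : x % (b : ℤ) = y % (b : ℤ) := (ZMod.intCast_eq_intCast_iff _ _ _).1 hxy
    rwa [Int.emod_eq_of_lt hx0 hxb, Int.emod_eq_of_lt hy0 hyb] at hmod
  have hBcard : B.card = ℓ + 1 := by
    rw [hBe, Finset.card_image_of_injOn hinj, Finset.card_erase_of_mem hb, hcard]
    omega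
  have hclB : AddSubgroup.closure (B : Set (ZMod b)) = ⊤ := by
    rw [eq_top_iff]
    intro z _
    obtain ⟨m, rfl⟩ := ZMod.intCast_surjective z
    suffices h1 : ((1 : ℤ) : ZMod b) ∈ AddSubgroup.closure (B : Set (ZMod b)) by
      have h2 := AddSubgroup.zsmul_mem _ h1 m
      simpa using h2
    set K := AddSubgroup.comap (Int.castAddHom (ZMod b))
      (AddSubgroup.closure (B : Set (ZMod b))) with hK
    have hAK : ∀ a ∈ A, a ∈ K := fun a ha =>
      AddSubgroup.mem_comap.2 (AddSubgroup.subset_closure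
        (Finset.mem_coe.2 (Finset.mem_image_of_mem _ ha)))
    obtain ⟨n, hn⟩ := Int.subgroup_cyclic K
    have hdvd : ∀ a ∈ A, n ∣ a := by
      intro a ha
      have h3 := hAK a ha
      rw [hn] at h3
      obtain ⟨m', hm⟩ := AddSubgroup.mem_closure_singleton.1 h3
      exact ⟨m', by rw [← hm, smul_eq_mul]; ring⟩
    have hn1 : n ∣ 1 := by
      rw [← hgcd]
      exact Finset.dvd_gcd fun a ha => hdvd a ha
    have h1K : (1 : ℤ) ∈ K := by
      rw [hn]
      obtain ⟨c, hc⟩ := hn1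
      exact AddSubgroup.mem_closure_singleton.2 ⟨c, by rw [smul_eq_mul, mul_comm, ← hc]⟩
    exact AddSubgroup.mem_comap.1 h1K
  obtain ⟨j, rfl⟩ : ∃ j, k = j + 1 := ⟨k - 1, by omega⟩
  have hkey := key_lemma B (nfold B j) h0B (by omega) hclB ⟨0, zero_mem_nfold h0B j⟩
  rw [ZMod.card] at hkey
  exact hkey
end

section
/- Let b ≥ 2 and suppose B is a subset of ℤ/bℤ which contains 0, generates all of ℤ/bℤ as a group, and has ℓ ≥ 2 non-zero elements. Then |2B| ≥ min(b, ℓ + 3), where 2B = B + B is the sumset. -/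
open Pointwise

theorem stmt7 (b : ℕ) (hb : 2 ≤ b) (B : Finset (ZMod b))
    (ℓ : ℕ) (hℓ : 2 ≤ ℓ)
    (h0 : (0 : ZMod b) ∈ B) (hcard : (B.erase 0).card = ℓ)
    (hgen : AddSubgroup.closure (B : Set (ZMod b)) = ⊤) :
    min b (ℓ + 3) ≤ (B + B).card := by
  classical
  haveI : NeZero b := ⟨by omega⟩
  by_contra hcon
  push_neg at hcon
  set n : ℕ := ℓ + 1 with hn
  have hBcard : B.card = n := by
    have h1 := Finset.card_erase_of_mem h0
    have h2 : 1 ≤ B.card := Finset.card_pos.mpr ⟨0, h0⟩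
    omega
  have hn3 : 3 ≤ n := by omega
  set T : Finset (ZMod b) := B + B with hTdef
  have hTb : T.card < b := lt_of_lt_of_le hcon (min_le_left _ _)
  have hTn : T.card ≤ n + 1 := by
    have := lt_of_lt_of_le hcon (min_le_right _ _); omega
  have hmemT : ∀ a ∈ B, ∀ c ∈ B, a + c ∈ T := fun a ha c hc => Finset.add_mem_add ha hc
  have hTmem : ∀ z ∈ T, ∃ a ∈ B, ∃ c ∈ B, a + c = z := fun z hz => Finset.mem_add.mp hz
  have hBT : B ⊆ T := fun c hc => by
    have := hmemT c hc 0 h0; simpa using this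
  -- closed finsets containing B are everything
  have L1 : ∀ S : Finset (ZMod b), (0 : ZMod b) ∈ S →
      (∀ a ∈ S, ∀ c ∈ S, a + c ∈ S) → B ⊆ S → S.card = b := by
    intro S h0S hcl hBS
    have hneg : ∀ a ∈ S, -a ∈ S := by
      intro a ha
      have hsub : S.image (a + ·) ⊆ S := by
        intro z hz; obtain ⟨c, hc, rfl⟩ := Finset.mem_image.mp hz
        exact hcl a ha c hc
      have hcards : S.card ≤ (S.image (a + ·)).card := by
        rw [Finset.card_image_of_injective _ (add_right_injective a)]
      have heq := Finset.eq_of_subset_of_card_le hsub hcards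
      have h0' : (0 : ZMod b) ∈ S.image (a + ·) := heq.symm ▸ h0S
      obtain ⟨c, hc, hac⟩ := Finset.mem_image.mp h0'
      have hca : c = -a := by
        have : a + c = 0 := hac
        linear_combination this
      exact hca ▸ hc
    have hall : ∀ z : ZMod b, z ∈ S := by
      intro z
      have hz : z ∈ AddSubgroup.closure (B : Set (ZMod b)) := by rw [hgen]; trivial
      exact AddSubgroup.closure_induction (fun y hy => hBS (Finset.mem_coe.mp hy)) h0S
        (fun p q _ _ hp hq => hcl p hp q hq) (fun p _ hp => hneg p hp) hz
    calc S.card = Finset.univ.card := by rw [Finset.eq_univ_iff_forall.mpr hall]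
      _ = b := by rw [Finset.card_univ, ZMod.card]
  have hTcard_ge : n ≤ T.card := hBcard ▸ Finset.card_le_card hBT
  rcases eq_or_lt_of_le hTcard_ge with hTeq | hTgt
  · -- T = B case
    have hTB : B = T := Finset.eq_of_subset_of_card_le hBT (by omega)
    have hcl : ∀ a ∈ B, ∀ c ∈ B, a + c ∈ B := by
      intro a ha c hc; rw [hTB]; exact hmemT a ha c hc
    have := L1 B h0 hcl (le_refl B)
    omega
  have hTcard : T.card = n + 1 := by omega
  obtain ⟨x, hx⟩ : ∃ x, T \ B = {x} :=
    Finset.card_eq_one.mp (by rw [Finset.card_sdiff_of_subset hBT]; omega)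
  have hxT : x ∈ T := (Finset.mem_sdiff.mp (hx ▸ Finset.mem_singleton_self x)).1
  have hxB : x ∉ B := (Finset.mem_sdiff.mp (hx ▸ Finset.mem_singleton_self x)).2
  have hTx : T = insert x B := by
    apply Finset.Subset.antisymm
    · intro z hz
      by_cases hzB : z ∈ B
      · exact Finset.mem_insert_of_mem hzB
      · have hzs : z ∈ T \ B := Finset.mem_sdiff.mpr ⟨hz, hzB⟩
        rw [hx, Finset.mem_singleton] at hzs
        rw [hzs]; exact Finset.mem_insert_self x B
    · intro z hz; rcases Finset.mem_insert.mp hz with rfl | hzB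
      exacts [hxT, hBT hzB]
  by_cases hstab : ∃ g : ZMod b, g ≠ 0 ∧ ∀ t ∈ T, g + t ∈ T
  · -- nontrivial stabilizer case
    obtain ⟨g₁, hg₁0, hPg₁⟩ := hstab
    set P : ZMod b → Prop := fun g => ∀ t ∈ T, g + t ∈ T with hPdef
    have hP0 : P 0 := fun t ht => by simpa using ht
    have hPadd : ∀ g h, P g → P h → P (g + h) := by
      intro g h hg hh t ht
      have := hg (h + t) (hh t ht); rwa [← add_assoc] at this
    have hPneg : ∀ g, P g → P (-g) := by
      intro g hg t ht
      have hsub : T.image (g + ·) ⊆ T := by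
        intro z hz; obtain ⟨c, hc, rfl⟩ := Finset.mem_image.mp hz; exact hg c hc
      have heq := Finset.eq_of_subset_of_card_le hsub
        (le_of_eq (Finset.card_image_of_injective _ (add_right_injective g)).symm)
      have htI : t ∈ T.image (g + ·) := heq.symm ▸ ht
      obtain ⟨c, hc, hgc⟩ := Finset.mem_image.mp htI
      have hcval : -g + t = c := by linear_combination - hgc
      rw [hcval]; exact hc
    set H : Finset (ZMod b) := Finset.univ.filter P with hH
    have hmemH : ∀ g, g ∈ H ↔ P g := fun g => by simp [hH]
    have hBH_T : B + H ⊆ T := by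
      intro z hz
      obtain ⟨c, hc, h, hh, rfl⟩ := Finset.mem_add.mp hz
      rw [add_comm]; exact (hmemH h).mp hh c (hBT hc)
    have hB_BH : B ⊆ B + H := by
      intro c hc
      have : c + 0 ∈ B + H := Finset.add_mem_add hc ((hmemH 0).mpr hP0)
      simpa using this
    by_cases hcover : T ⊆ B + H
    · have hTT : ∀ a ∈ T, ∀ c ∈ T, a + c ∈ T := by
        intro a ha c hc
        obtain ⟨a1, ha1, h1, hh1, rfl⟩ := Finset.mem_add.mp (hcover ha)
        obtain ⟨a2, ha2, h2, hh2, rfl⟩ := Finset.mem_add.mp (hcover hc)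
        have h12 : P (h1 + h2) := hPadd _ _ ((hmemH h1).mp hh1) ((hmemH h2).mp hh2)
        have hT12 : (h1 + h2) + (a1 + a2) ∈ T := h12 _ (hmemT a1 ha1 a2 ha2)
        have hre : a1 + h1 + (a2 + h2) = (h1 + h2) + (a1 + a2) := by ring
        rw [hre]; exact hT12
      have h0T : (0 : ZMod b) ∈ T := hBT h0
      have := L1 T h0T hTT hBT
      omega
    · obtain ⟨y, hyT, hyBH⟩ : ∃ y ∈ T, y ∉ B + H := by
        by_contra hc; push_neg at hc
        exact hcover fun z hz => hc z hz
      have hyH_T : H.image (y + ·) ⊆ T := by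
        intro z hz
        obtain ⟨h, hh, rfl⟩ := Finset.mem_image.mp hz
        rw [add_comm]; exact (hmemH h).mp hh y hyT
      have hdisj : Disjoint (B + H) (H.image (y + ·)) := by
        rw [Finset.disjoint_left]
        intro a haBH haY
        obtain ⟨h1, hh1, hEq⟩ := Finset.mem_image.mp haY
        obtain ⟨c, hc, h2, hh2, hEq2⟩ := Finset.mem_add.mp haBH
        apply hyBH
        have hyval : y = c + (h2 + -h1) := by
          have : y + h1 = c + h2 := by rw [hEq, hEq2]
          linear_combination this
        rw [hyval]
        exact Finset.add_mem_add hc ((hmemH _).mpr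
          (hPadd _ _ ((hmemH h2).mp hh2) (hPneg _ ((hmemH h1).mp hh1))))
      have hcard1 : n ≤ (B + H).card := hBcard ▸ Finset.card_le_card hB_BH
      have hcard2 : 2 ≤ (H.image (y + ·)).card := by
        rw [Finset.card_image_of_injective _ (add_right_injective y)]
        refine Finset.one_lt_card.mpr ⟨0, (hmemH 0).mpr hP0, g₁, (hmemH g₁).mpr hPg₁, ?_⟩
        exact fun h => hg₁0 h.symm
      have hunion : (B + H) ∪ H.image (y + ·) ⊆ T := Finset.union_subset hBH_T hyH_T
      have hle := Finset.card_le_card hunion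
      rw [Finset.card_union_of_disjoint hdisj] at hle
      omega
  · -- trivial stabilizer case
    have htriv : ∀ g : ZMod b, (∀ t ∈ T, g + t ∈ T) → g = 0 := by
      intro g hg; by_contra hne; exact hstab ⟨g, hne, hg⟩
    have E1 : ∀ g ∈ B, (x - n • g) ∈ T ∧ B.image (g + ·) = T.erase (x - n • g) := by
      intro g hg
      have hsub : B.image (g + ·) ⊆ T := by
        intro z hz; obtain ⟨c, hc, rfl⟩ := Finset.mem_image.mp hz; exact hmemT g hg c hc
      have hIcard : (B.image (g + ·)).card = n := by
        rw [Finset.card_image_of_injective _ (add_right_injective g), hBcard]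
      obtain ⟨μ, hμ⟩ : ∃ μ, T \ B.image (g + ·) = {μ} :=
        Finset.card_eq_one.mp (by rw [Finset.card_sdiff_of_subset hsub]; omega)
      have hμT : μ ∈ T := (Finset.mem_sdiff.mp (hμ ▸ Finset.mem_singleton_self μ)).1
      have hμI : μ ∉ B.image (g + ·) := (Finset.mem_sdiff.mp (hμ ▸ Finset.mem_singleton_self μ)).2
      have hIμ : B.image (g + ·) = T.erase μ := by
        apply Finset.eq_of_subset_of_card_le
        · intro z hz; exact Finset.mem_erase.mpr ⟨fun h => hμI (h ▸ hz), hsub hz⟩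
        · rw [Finset.card_erase_of_mem hμT, hTcard, hIcard]; omega
      have hsum1 : ∑ z ∈ B.image (g + ·), z = n • g + ∑ c ∈ B, c := by
        rw [Finset.sum_image (fun a _ c _ h => add_left_cancel h)]
        rw [Finset.sum_add_distrib, Finset.sum_const, hBcard]
      have hsum2 : ∑ z ∈ T.erase μ, z + μ = ∑ z ∈ T, z := Finset.sum_erase_add _ _ hμT
      have hsum3 : ∑ z ∈ T, z = x + ∑ c ∈ B, c := by rw [hTx, Finset.sum_insert hxB]
      have hμval : μ = x - n • g := by
        rw [← hIμ, hsum1, hsum3] at hsum2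
        linear_combination hsum2
      rw [← hμval]; exact ⟨hμT, hIμ⟩
    have C1 : ∀ g ∈ B, ∀ z ∈ T, z ≠ x - n • g → ∃ c ∈ B, g + c = z := by
      intro g hg z hz hne
      have hzI : z ∈ B.image (g + ·) := (E1 g hg).2 ▸ Finset.mem_erase.mpr ⟨hne, hz⟩
      obtain ⟨c, hc, hEq⟩ := Finset.mem_image.mp hzI
      exact ⟨c, hc, hEq⟩
    have C2 : ∀ g ∈ B, ∀ c ∈ B, g + c ≠ x - n • g := by
      intro g hg c hc hEq
      have hmem : g + c ∈ B.image (g + ·) := Finset.mem_image_of_mem _ hc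
      rw [(E1 g hg).2] at hmem
      exact (Finset.mem_erase.mp hmem).1 hEq
    have hPofB : ∀ g ∈ B, g + x ∈ T → ∀ t ∈ T, g + t ∈ T := by
      intro g hg hgx t ht
      rw [hTx] at ht; rcases Finset.mem_insert.mp ht with rfl | htB
      · exact hgx
      · exact hmemT g hg t htB
    have C4 : ∀ g ∈ B, g ≠ 0 → x + g ∉ T := by
      intro g hg hne hmem
      exact hne (htriv g (hPofB g hg (by rwa [add_comm])))
    have C3 : ∀ g ∈ B, g ≠ 0 → n • g ≠ 0 ∧ x - n • g ∈ B := by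
      intro g hg hne
      have hnz : n • g ≠ 0 := by
        intro h0'
        apply hne; apply htriv g
        have hI : B.image (g + ·) = B := by
          rw [(E1 g hg).2, h0', sub_zero, hTx, Finset.erase_insert hxB]
        intro t ht
        rw [hTx] at ht; rcases Finset.mem_insert.mp ht with rfl | htB
        · obtain ⟨c1, hc1, c2, hc2, hEq⟩ := hTmem t hxT
          have hgc1 : g + c1 ∈ B := by rw [← hI]; exact Finset.mem_image_of_mem _ hc1
          have hT2 : (g + c1) + c2 ∈ T := hmemT _ hgc1 _ hc2
          have : g + t = g + c1 + c2 := by rw [← hEq]; ring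
          rw [this]; exact hT2
        · have : g + t ∈ B := by rw [← hI]; exact Finset.mem_image_of_mem _ htB
          exact hBT this
      refine ⟨hnz, ?_⟩
      have hμT := (E1 g hg).1
      rw [hTx] at hμT
      rcases Finset.mem_insert.mp hμT with hEq | h
      · exfalso; apply hnz; linear_combination - hEq
      · exact h
    obtain ⟨g₁, hg₁B'⟩ : ∃ g, g ∈ B.erase 0 :=
      Finset.Nonempty.exists_mem (Finset.card_pos.mp (by omega))
    have hg₁B : g₁ ∈ B := Finset.mem_of_mem_erase hg₁B'
    have hg₁0 : g₁ ≠ 0 := (Finset.mem_erase.mp hg₁B').1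
    set m : ℕ := addOrderOf g₁ with hm
    have hm0 : 0 < m := addOrderOf_pos g₁
    have hmsmul : m • g₁ = 0 := addOrderOf_nsmul_eq_zero g₁
    have hjne : ∀ j : ℕ, 1 ≤ j → j < m → j • g₁ ≠ 0 := by
      intro j h1 h2 hEq
      have hdvd := addOrderOf_dvd_of_nsmul_eq_zero hEq
      have := Nat.le_of_dvd (by omega) hdvd
      omega
    set Zp : ZMod b → Prop := fun y => ∃ w : ℕ, w • g₁ = y with hZpdef
    have hZp0 : Zp 0 := ⟨0, by simp⟩
    have hZpadd : ∀ y z, Zp y → Zp z → Zp (y + z) := by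
      rintro y z ⟨w1, rfl⟩ ⟨w2, rfl⟩; exact ⟨w1 + w2, add_nsmul g₁ w1 w2⟩
    have hZpneg : ∀ y, Zp y → Zp (-y) := by
      rintro y ⟨w, rfl⟩
      refine ⟨w * (m - 1), ?_⟩
      have hsum : w • g₁ + (w * (m - 1)) • g₁ = 0 := by
        rw [← add_nsmul]
        have hwm : w + w * (m - 1) = w * m := by
          have : m - 1 + 1 = m := by omega
          calc w + w * (m - 1) = w * (m - 1) + w * 1 := by ring
            _ = w * (m - 1 + 1) := by rw [Nat.mul_add]
            _ = w * m := by rw [this]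
        rw [hwm, Nat.mul_comm w m, mul_nsmul, hmsmul, smul_zero]
      linear_combination hsum
    have hZpsub : ∀ y z, Zp y → Zp z → Zp (y - z) := by
      intro y z hy hz; rw [sub_eq_add_neg]; exact hZpadd _ _ hy (hZpneg _ hz)
    have hrep : ∀ y, Zp y → ∃ j : ℕ, j < m ∧ j • g₁ = y := by
      rintro y ⟨w, rfl⟩
      refine ⟨w % m, Nat.mod_lt _ hm0, ?_⟩
      conv_rhs => rw [← Nat.div_add_mod w m]
      rw [add_nsmul, mul_nsmul, hmsmul, smul_zero, zero_add]
    have hZx : Zp x := by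
      by_contra hnx
      have hmul : ∀ j : ℕ, j • g₁ ∈ B := by
        intro j; induction j with
        | zero => simpa using h0
        | succ k ih =>
          have hT' : g₁ + k • g₁ ∈ T := hmemT g₁ hg₁B _ ih
          rw [hTx] at hT'
          rcases Finset.mem_insert.mp hT' with hEq | hB2
          · exact absurd ⟨k + 1, by rw [succ_nsmul']; exact hEq⟩ hnx
          · rw [succ_nsmul']; exact hB2
      have hxne : x ≠ x - n • g₁ := by
        intro hEq; exact (C3 g₁ hg₁B hg₁0).1 (by linear_combination hEq)
      obtain ⟨c, hc, hEq⟩ := C1 g₁ hg₁B x hxT hxne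
      have hxg : x + g₁ ∈ T := by
        have hTT := hmemT c hc (2 • g₁) (hmul 2)
        have hval : c + 2 • g₁ = x + g₁ := by
          have h2 : (2 : ℕ) • g₁ = g₁ + g₁ := two_nsmul g₁
          rw [h2]; linear_combination hEq
        rwa [hval] at hTT
      exact C4 g₁ hg₁B hg₁0 hxg
    have hex : ∃ j, 1 ≤ j ∧ j • g₁ = n • g₁ := ⟨n, by omega, rfl⟩
    set n₀ : ℕ := Nat.find hex with hn₀def
    obtain ⟨hn₀1, hn₀eq⟩ := Nat.find_spec hex
    have hn₀min : ∀ j, j < n₀ → ¬(1 ≤ j ∧ j • g₁ = n • g₁) := fun j hj => Nat.find_min hex hj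
    have hn₀n : n₀ ≤ n := Nat.find_le ⟨by omega, rfl⟩
    have hkey : ∀ d : ℕ, 1 ≤ d → d < n₀ → d • g₁ ≠ 0 := by
      intro d h1 h2 hEq
      have hsum : (n₀ - d) • g₁ + d • g₁ = n₀ • g₁ := by
        rw [← add_nsmul]; congr 1; omega
      rw [hEq, add_zero, hn₀eq] at hsum
      exact hn₀min (n₀ - d) (by omega) ⟨by omega, hsum⟩
    have harc : ∀ j : ℕ, 1 ≤ j → j ≤ n₀ → x - j • g₁ ∈ B := by
      intro j h1 h2
      induction j with
      | zero => omega
      | succ k ih =>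
        rcases Nat.eq_zero_or_pos k with rfl | hk1
        · have hxne : x ≠ x - n • g₁ := by
            intro hEq; exact (C3 g₁ hg₁B hg₁0).1 (by linear_combination hEq)
          obtain ⟨c, hc, hEq⟩ := C1 g₁ hg₁B x hxT hxne
          have : c = x - (0 + 1) • g₁ := by
            rw [zero_add, one_nsmul]; linear_combination hEq
          rwa [← this]
        · have hkB : x - k • g₁ ∈ B := ih (by omega) (by omega)
          have hzT : x - k • g₁ ∈ T := hBT hkB
          have hzne : x - k • g₁ ≠ x - n • g₁ := by
            intro hEq
            have hkn : k • g₁ = n • g₁ := by linear_combination - hEq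
            exact hn₀min k (by omega) ⟨by omega, hkn⟩
          obtain ⟨c, hc, hEq⟩ := C1 g₁ hg₁B _ hzT hzne
          have : c = x - (k + 1) • g₁ := by
            rw [succ_nsmul]; linear_combination hEq
          rwa [← this]
    have hinj : ∀ i, 1 ≤ i → i ≤ n₀ → ∀ j, 1 ≤ j → j ≤ n₀ →
        x - i • g₁ = x - j • g₁ → i = j := by
      have key : ∀ i j, 1 ≤ i → j ≤ n₀ → i < j → i • g₁ = j • g₁ → False := by
        intro i j h1 h2 hij hEq
        have hd : (j - i) • g₁ = 0 := by
          have : i • g₁ + (j - i) • g₁ = j • g₁ := by rw [← add_nsmul]; congr 1; omega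
          rw [hEq] at this
          linear_combination this
        exact hkey (j - i) (by omega) (by omega) hd
      intro i hi1 hi2 j hj1 hj2 hEq
      have hEq2 : i • g₁ = j • g₁ := by linear_combination - hEq
      rcases lt_trichotomy i j with h | h | h
      · exact absurd hEq2 (fun hc => key i j hi1 hj2 h hc)
      · exact h
      · exact absurd hEq2.symm (fun hc => key j i hj1 hi2 h hc)
    set A : Finset (ZMod b) := (Finset.Icc 1 n₀).image (fun j => x - j • g₁) with hA
    have hAB : A ⊆ B := by
      intro z hz; obtain ⟨j, hj, rfl⟩ := Finset.mem_image.mp hz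
      rw [Finset.mem_Icc] at hj; exact harc j hj.1 hj.2
    have hAcard : A.card = n₀ := by
      rw [Finset.card_image_of_injOn, Nat.card_Icc]; · omega
      intro i hi j hj hEq
      rw [Finset.mem_coe, Finset.mem_Icc] at hi hj
      exact hinj i hi.1 hi.2 j hj.1 hj.2 hEq
    have hBZ : ∀ y ∈ B, Zp y → y ∈ A := by
      intro y hyB hyZ
      obtain ⟨j, hjm, hjEq⟩ := hrep (x - y) (hZpsub _ _ hZx hyZ)
      have hy : y = x - j • g₁ := by linear_combination hjEq
      have hj1 : 1 ≤ j := by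
        rcases Nat.eq_zero_or_pos j with rfl | h
        · exfalso; apply hxB
          have : y = x := by rw [hy, zero_nsmul, sub_zero]
          rwa [← this]
        · exact h
      by_cases hjn : j ≤ n₀
      · exact Finset.mem_image.mpr ⟨j, Finset.mem_Icc.mpr ⟨hj1, hjn⟩, hy.symm⟩
      · exfalso
        have hwalk : ∀ d : ℕ, ∀ i, 1 ≤ i → i + d = j → x - i • g₁ ∈ B := by
          intro d
          induction d with
          | zero =>
            intro i h1 h2
            have hij : i = j := by omega
            rw [hij, ← hy]; exact hyB
          | succ k ih =>
            intro i h1 h2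
            have hnext : x - (i + 1) • g₁ ∈ B := ih (i + 1) (by omega) (by omega)
            have hT' : (x - (i + 1) • g₁) + g₁ ∈ T := hmemT _ hnext g₁ hg₁B
            have hval : (x - (i + 1) • g₁) + g₁ = x - i • g₁ := by
              rw [succ_nsmul]; ring
            rw [hval, hTx] at hT'
            rcases Finset.mem_insert.mp hT' with hEq | hB2
            · exfalso
              have : i • g₁ = 0 := by linear_combination - hEq
              exact hjne i h1 (by omega) this
            · exact hB2
        have hc := hwalk (j - (n₀ + 1)) (n₀ + 1) (by omega) (by omega)
        apply C2 g₁ hg₁B _ hc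
        have : (n₀ + 1) • g₁ = n₀ • g₁ + g₁ := succ_nsmul g₁ n₀
        rw [← hn₀eq]; linear_combination this
    rcases eq_or_lt_of_le hn₀n with hEqn | hltn
    · -- n₀ = n : B is an arithmetic progression generating everything
      have hBA : B = A :=
        (Finset.eq_of_subset_of_card_le hAB (by rw [hAcard, hBcard, hEqn])).symm
      have hZB : ∀ y ∈ B, Zp y := by
        intro y hy
        rw [hBA] at hy
        obtain ⟨j, hj, rfl⟩ := Finset.mem_image.mp hy
        exact hZpsub _ _ hZx ⟨j, rfl⟩
      have hBsub : (B : Set (ZMod b)) ⊆ (AddSubgroup.zmultiples g₁ : Set (ZMod b)) := by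
        intro y hy
        obtain ⟨w, hw⟩ := hZB y (Finset.mem_coe.mp hy)
        exact AddSubgroup.mem_zmultiples_iff.mpr ⟨(w : ℤ), by rw [natCast_zsmul]; exact hw⟩
      have htop : AddSubgroup.zmultiples g₁ = ⊤ := by
        rw [eq_top_iff, ← hgen]
        exact (AddSubgroup.closure_le _).mpr hBsub
      have hmb : m = b := by
        have h1 := Nat.card_zmultiples g₁
        rw [htop] at h1
        have h2 : Nat.card (⊤ : AddSubgroup (ZMod b)) = Nat.card (ZMod b) :=
          Nat.card_congr AddSubgroup.topEquiv.toEquiv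
        have h3 : Nat.card (ZMod b) = b := Nat.card_zmod b
        omega
      have hZall : ∀ z : ZMod b, Zp z := by
        intro z
        have hzin : z ∈ AddSubgroup.zmultiples g₁ := htop ▸ AddSubgroup.mem_top z
        obtain ⟨k, hk⟩ := AddSubgroup.mem_zmultiples_iff.mp hzin
        refine ⟨(k % (m : ℤ)).toNat, ?_⟩
        have hm' : (0 : ℤ) < (m : ℤ) := by exact_mod_cast hm0
        have hnonneg : 0 ≤ k % (m : ℤ) := Int.emod_nonneg k (by omega)
        have hk0 : ((m : ℤ) * (k / (m : ℤ))) • g₁ = 0 := by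
          rw [mul_comm, mul_zsmul, natCast_zsmul, hmsmul, smul_zero]
        calc ((k % (m : ℤ)).toNat) • g₁ = ((k % (m : ℤ)).toNat : ℤ) • g₁ :=
              (natCast_zsmul g₁ _).symm
          _ = (k % (m : ℤ)) • g₁ := by rw [Int.toNat_of_nonneg hnonneg]
          _ = ((m : ℤ) * (k / (m : ℤ))) • g₁ + (k % (m : ℤ)) • g₁ := by rw [hk0, zero_add]
          _ = ((m : ℤ) * (k / (m : ℤ)) + k % (m : ℤ)) • g₁ := (add_zsmul g₁ _ _).symm
          _ = k • g₁ := by rw [Int.mul_ediv_add_emod]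
          _ = z := hk
      have hTimg : ∀ z, z ∈ T ↔ ∃ s ∈ Finset.Icc 2 (2 * n), (x + x) - s • g₁ = z := by
        intro z
        constructor
        · intro hz
          obtain ⟨c1, hc1, c2, hc2, rfl⟩ := hTmem z hz
          rw [hBA] at hc1 hc2
          obtain ⟨i, hi, rfl⟩ := Finset.mem_image.mp hc1
          obtain ⟨j2, hj2, rfl⟩ := Finset.mem_image.mp hc2
          rw [Finset.mem_Icc] at hi hj2
          refine ⟨i + j2, Finset.mem_Icc.mpr ⟨by omega, by omega⟩, ?_⟩
          rw [add_nsmul]; ring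
        · rintro ⟨s, hs, rfl⟩
          rw [Finset.mem_Icc] at hs
          have hmem1 : x - (min n (s - 1)) • g₁ ∈ B := by
            rw [hBA]
            exact Finset.mem_image.mpr ⟨min n (s - 1),
              Finset.mem_Icc.mpr ⟨by omega, by omega⟩, rfl⟩
          have hmem2 : x - (s - min n (s - 1)) • g₁ ∈ B := by
            rw [hBA]
            exact Finset.mem_image.mpr ⟨s - min n (s - 1),
              Finset.mem_Icc.mpr ⟨by omega, by omega⟩, rfl⟩
          have hkey2 : ∀ i j : ℕ, i + j = s →
              (x - i • g₁) + (x - j • g₁) = x + x - s • g₁ := by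
            intro i j hij
            rw [← hij, add_nsmul]; ring
          have hval := hkey2 (min n (s - 1)) (s - min n (s - 1)) (by omega)
          rw [← hval]
          exact hmemT _ hmem1 _ hmem2
      by_cases hwin : 2 * n - 2 < b
      · have hinj2 : Set.InjOn (fun s : ℕ => (x + x) - s • g₁)
            ((Finset.Icc 2 (2 * n)) : Set ℕ) := by
          intro s hs t ht hEq
          rw [Finset.mem_coe, Finset.mem_Icc] at hs ht
          simp only at hEq
          have h1 : s • g₁ = t • g₁ := by linear_combination - hEq
          have key : ∀ u v : ℕ, u < v → v ≤ 2 * n → 2 ≤ u → u • g₁ = v • g₁ → False := by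
            intro u v huv hv hu hEq2
            have hd : (v - u) • g₁ = 0 := by
              have : u • g₁ + (v - u) • g₁ = v • g₁ := by rw [← add_nsmul]; congr 1; omega
              rw [hEq2] at this
              linear_combination this
            have hdvd := addOrderOf_dvd_of_nsmul_eq_zero hd
            have := Nat.le_of_dvd (by omega) hdvd
            omega
          rcases lt_trichotomy s t with h | h | h
          · exact absurd h1 (fun hc => key s t h ht.2 hs.1 hc)
          · exact h
          · exact absurd h1.symm (fun hc => key t s h hs.2 ht.1 hc)
        have hTeq2 : T = (Finset.Icc 2 (2 * n)).image (fun s => (x + x) - s • g₁) := by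
          ext z
          rw [Finset.mem_image]
          constructor
          · intro hz; obtain ⟨s, hs, hEq⟩ := (hTimg z).mp hz; exact ⟨s, hs, hEq⟩
          · rintro ⟨s, hs, hEq⟩; exact (hTimg z).mpr ⟨s, hs, hEq⟩
        have hcardT : T.card = 2 * n - 1 := by
          rw [hTeq2, Finset.card_image_of_injOn hinj2, Nat.card_Icc]; omega
        omega
      · have hall : ∀ z : ZMod b, z ∈ T := by
          intro z
          obtain ⟨j, hjm, hjEq⟩ := hrep _ (hZall (x + x - z))
          refine (hTimg z).mpr ⟨if j < 2 then j + b else j, ?_, ?_⟩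
          · rw [Finset.mem_Icc]; split_ifs with hj <;> omega
          · have hsmul : (if j < 2 then j + b else j) • g₁ = j • g₁ := by
              split_ifs with hj
              · rw [add_nsmul]
                have hb0 : b • g₁ = 0 := by simp [nsmul_eq_mul, ZMod.natCast_self]
                rw [hb0, add_zero]
              · rfl
            rw [hsmul]; linear_combination - hjEq
        have hTuniv : T = Finset.univ := Finset.eq_univ_iff_forall.mpr hall
        have : T.card = b := by rw [hTuniv, Finset.card_univ, ZMod.card]
        omega
    · -- n₀ < n
      obtain ⟨h, hhB, hhA⟩ : ∃ h ∈ B, h ∉ A := by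
        by_contra hcc; push_neg at hcc
        have hsub : B ⊆ A := fun z hz => hcc z hz
        have := Finset.card_le_card hsub
        omega
      have hhZ : ¬ Zp h := fun hz => hhA (hBZ h hhB hz)
      have hh0 : h ≠ 0 := fun hEq => hhZ (hEq ▸ hZp0)
      have hwalkup : ∀ j : ℕ, h + j • g₁ ∈ B := by
        intro j; induction j with
        | zero => simpa using hhB
        | succ k ih =>
          have hT' : (h + k • g₁) + g₁ ∈ T := hmemT _ ih g₁ hg₁B
          have hval : (h + k • g₁) + g₁ = h + (k + 1) • g₁ := by rw [succ_nsmul]; ring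
          rw [hval, hTx] at hT'
          rcases Finset.mem_insert.mp hT' with hEq | hB2
          · exfalso; apply hhZ
            have hhval : h = x - (k + 1) • g₁ := by linear_combination hEq
            rw [hhval]; exact hZpsub _ _ hZx ⟨k + 1, rfl⟩
          · exact hB2
      obtain ⟨w, hw⟩ := hZx
      have hfin : x + h ∈ B := by
        have hmem := hwalkup w
        rw [hw, add_comm] at hmem
        exact hmem
      exact C4 h hhB hh0 (hBT hfin)
end

section
/- Let A = {0,1} ∪ {a+1, a+2, ..., b} for integers a, b with 2 ≤ a ≤ b−2. Then n_{a,A} = a, N_{a,A} = a = b − ℓ where ℓ = |A| − 2, and in particular a ∉ (a−1)A, the (a−1)-fold sumset of A. -/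
open Pointwise

lemma mem_nfold_succ {A : Finset ℤ} {x : ℤ} {n : ℕ} :
    x ∈ nfold A (n+1) ↔ ∃ y ∈ nfold A n, ∃ z ∈ A, y + z = x := by
  simp [nfold, Finset.mem_add]

lemma self_mem_nfold {A : Finset ℤ} (h1 : (1:ℤ) ∈ A) : ∀ k : ℕ, (k:ℤ) ∈ nfold A k
  | 0 => by simp [nfold]
  | k+1 => by
    rw [mem_nfold_succ]
    exact ⟨k, self_mem_nfold h1 k, 1, h1, by push_cast; ring⟩

lemma nfold_bound (a : ℕ) (A : Finset ℤ)
    (hmem : ∀ z ∈ A, z = 0 ∨ z = 1 ∨ (a:ℤ) + 1 ≤ z) :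
    ∀ (N : ℕ) (x : ℤ), x ∈ nfold A N → 0 ≤ x ∧ (x ≤ a → x ≤ N)
  | 0, x => by simp [nfold]; omega
  | N+1, x => by
    rw [mem_nfold_succ]
    rintro ⟨y, hy, z, hz, rfl⟩
    obtain ⟨hy0, hyb⟩ := nfold_bound a A hmem N y hy
    have hz0 : z = 0 ∨ z = 1 ∨ (a:ℤ) + 1 ≤ z := hmem z hz
    constructor
    · rcases hz0 with h | h | h <;> omega
    · intro hle
      rcases hz0 with h | h | h
      · have := hyb (by omega); omega
      · have := hyb (by omega); omega
      · omega

theorem stmt10 (a b : ℕ) (ha : 2 ≤ a) (hab : a + 2 ≤ b)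
    (A : Finset ℤ) (hA : A = {0, 1} ∪ Finset.Icc ((a : ℤ) + 1) (b : ℤ)) :
    nmin A b a = (a : ℤ) ∧
    Nmin A b a = a ∧
    (a : ℤ) = (b : ℤ) - ((A.card : ℤ) - 2) ∧
    (a : ℤ) ∉ nfold A (a - 1) := by
  have hmem : ∀ z ∈ A, z = 0 ∨ z = 1 ∨ (a:ℤ) + 1 ≤ z := by
    intro z hz
    rw [hA] at hz
    simp [Finset.mem_Icc] at hz
    omega
  have h1A : (1:ℤ) ∈ A := by rw [hA]; simp
  have haN : (a:ℤ) ∈ nfold A a := self_mem_nfold h1A a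
  have hnotin : ∀ N : ℕ, N < a → (a:ℤ) ∉ nfold A N := by
    intro N hN hin
    have := nfold_bound a A hmem N a hin
    omega
  have hnmin : nmin A b a = (a:ℤ) := by
    apply IsLeast.csInf_eq
    constructor
    · exact ⟨by exact_mod_cast Nat.one_le_of_lt ha, ⟨a, by omega, haN⟩, rfl⟩
    · rintro n ⟨hn1, _, hnmod⟩
      by_contra h
      push_neg at h
      have hb0 : (0:ℤ) < b := by exact_mod_cast (by omega : 0 < b)
      have hdvd : (b:ℤ) ∣ n - a := by
        rw [Int.dvd_iff_emod_eq_zero, Int.sub_emod, hnmod]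
        simp
      obtain ⟨k, hk⟩ := hdvd
      have hk1 : k ≤ -1 := by nlinarith
      have : (b:ℤ) * k ≤ b * (-1) := by
        apply mul_le_mul_of_nonneg_left hk1 (le_of_lt hb0)
      have hba : (a:ℤ) + 2 ≤ b := by exact_mod_cast hab
      omega
  have hNmin : Nmin A b a = a := by
    unfold Nmin
    rw [hnmin]
    apply IsLeast.csInf_eq
    constructor
    · exact ⟨by omega, haN⟩
    · rintro N ⟨hN1, hNin⟩
      by_contra h
      exact hnotin N (by omega) hNin
  have hcard : A.card = 2 + (b - a) := by
    rw [hA, Finset.card_union_of_disjoint]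
    · rw [Int.card_Icc]
      have : ({0, 1} : Finset ℤ).card = 2 := by decide
      rw [this]
      omega
    · simp [Finset.disjoint_left, Finset.mem_Icc]
      omega
  refine ⟨hnmin, hNmin, ?_, hnotin (a-1) (by omega)⟩
  rw [hcard]
  push_cast
  omega
end

section
/- Let A = {0,1,...,b} \ {a} for integers a, b with 2 ≤ a ≤ b−2. Then E(A) = ∅ and E(b−A) = ∅, while a ∉ A; consequently the equality NA = {0,1,...,bN} \ (E(A) ∪ (bN − E(b−A))) fails for N = 1 = b − ℓ − 1, where ℓ = |A| − 2. -/
open Pointwise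

lemma nat_mem_nfold (A : Finset ℤ) (h1 : (1 : ℤ) ∈ A) (n : ℕ) : (n : ℤ) ∈ nfold A n := by
  induction n with
  | zero => simp [nfold]
  | succ k ih =>
    have : ((k : ℤ) + 1) ∈ nfold A k + A := Finset.add_mem_add ih h1
    simpa [nfold] using this

lemma postE_empty_of_one_mem (A : Finset ℤ) (h1 : (1 : ℤ) ∈ A) : postE A = ∅ := by
  ext n
  simp only [postE, Set.mem_setOf_eq, Set.mem_empty_iff_false, iff_false, not_and, not_not]
  intro hn
  refine ⟨n.toNat, by omega, ?_⟩
  have := nat_mem_nfold A h1 n.toNat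
  rwa [Int.toNat_of_nonneg (by omega)] at this

theorem stmt11 (a b : ℤ) (ha : 2 ≤ a) (hab : a ≤ b - 2)
    (A : Finset ℤ) (hA : A = Finset.Icc 0 b \ {a}) :
    postE A = ∅ ∧
    postE (A.image (fun x => b - x)) = ∅ ∧
    a ∉ A ∧
    (1 : ℤ) = b - ((A.card : ℤ) - 2) - 1 ∧
    (↑(nfold A 1) : Set ℤ) ≠
      Set.Icc 0 (b * (1 : ℕ)) \
        (postE A ∪ (fun m => b * (1 : ℕ) - m) '' postE (A.image (fun x => b - x))) := by
  have h1A : (1 : ℤ) ∈ A := by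
    rw [hA]
    simp only [Finset.mem_sdiff, Finset.mem_Icc, Finset.mem_singleton]
    omega
  have hE1 : postE A = ∅ := postE_empty_of_one_mem A h1A
  have h1B : (1 : ℤ) ∈ A.image (fun x => b - x) := by
    rw [hA]
    refine Finset.mem_image.2 ⟨b - 1, ?_, by ring⟩
    simp only [Finset.mem_sdiff, Finset.mem_Icc, Finset.mem_singleton]
    omega
  have hE2 : postE (A.image (fun x => b - x)) = ∅ := postE_empty_of_one_mem _ h1B
  have haA : a ∉ A := by
    rw [hA]; simp
  have hcard : A.card = b.toNat := by
    rw [hA]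
    rw [Finset.card_sdiff_of_subset (by simp; omega)]
    rw [Int.card_Icc]
    simp
    omega
  refine ⟨hE1, hE2, haA, by rw [hcard]; omega, ?_⟩
  intro h
  have haR : a ∈ Set.Icc (0:ℤ) (b * (1 : ℕ)) \
      (postE A ∪ (fun m => b * (1 : ℕ) - m) '' postE (A.image (fun x => b - x))) := by
    rw [hE1, hE2]
    simp only [Set.image_empty, Set.empty_union, Set.diff_empty, Set.mem_Icc]
    push_cast
    constructor <;> omega
  rw [← h] at haR
  have : a ∈ nfold A 1 := haR
  have : a ∈ A := by
    have h01 : nfold A 1 = {(0:ℤ)} + A := rfl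
    rw [h01] at this
    rw [show ({0} : Finset ℤ) = 0 from rfl, zero_add] at this; exact this
  exact haA this
end

section
/- Let A = {0, a, 2a, b} with 0 < a < 2a < b and gcd(a, b) = 1. Then for every N ≥ 1, NA = {0,1,...,bN} \ (E(A) ∪ (bN − E(b−A))). -/
open Pointwise

lemma mem_nfold_xyz (a b : ℤ) (N : ℕ) (n : ℤ) :
    n ∈ nfold ({0, a, 2*a, b} : Finset ℤ) N ↔
      ∃ x y z : ℕ, x + y + z ≤ N ∧ n = x*a + y*(2*a) + z*b := by
  induction N generalizing n with
  | zero =>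
    simp only [nfold, Finset.mem_singleton]
    constructor
    · rintro rfl; exact ⟨0, 0, 0, by omega, by push_cast; ring⟩
    · rintro ⟨x, y, z, hx, rfl⟩
      obtain ⟨rfl, rfl, rfl⟩ : x = 0 ∧ y = 0 ∧ z = 0 := by omega
      push_cast; ring
  | succ N ih =>
    rw [nfold, Finset.mem_add]
    constructor
    · rintro ⟨s, hs, e, he, rfl⟩
      obtain ⟨x, y, z, hxyz, rfl⟩ := (ih _).mp hs
      simp only [Finset.mem_insert, Finset.mem_singleton] at he
      rcases he with rfl | rfl | rfl | rfl
      · exact ⟨x, y, z, by omega, by ring⟩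
      · exact ⟨x+1, y, z, by omega, by push_cast; ring⟩
      · exact ⟨x, y+1, z, by omega, by push_cast; ring⟩
      · exact ⟨x, y, z+1, by omega, by push_cast; ring⟩
    · rintro ⟨x, y, z, hxyz, rfl⟩
      by_cases h : x + y + z ≤ N
      · exact ⟨_, (ih _).mpr ⟨x, y, z, h, rfl⟩, 0, by simp, by ring⟩
      · rcases Nat.eq_zero_or_pos x with rfl | hx
        · rcases Nat.eq_zero_or_pos y with rfl | hy
          · obtain ⟨z', rfl⟩ : ∃ z', z = z' + 1 := ⟨z - 1, by omega⟩
            exact ⟨(0:ℕ)*a + (0:ℕ)*(2*a) + z'*b,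
              (ih _).mpr ⟨0, 0, z', by omega, rfl⟩, b, by simp, by push_cast; ring⟩
          · obtain ⟨y', rfl⟩ : ∃ y', y = y' + 1 := ⟨y - 1, by omega⟩
            exact ⟨(0:ℕ)*a + y'*(2*a) + z*b,
              (ih _).mpr ⟨0, y', z, by omega, rfl⟩, 2*a, by simp, by push_cast; ring⟩
        · obtain ⟨x', rfl⟩ : ∃ x', x = x' + 1 := ⟨x - 1, by omega⟩
          exact ⟨x'*a + y*(2*a) + z*b,
            (ih _).mpr ⟨x', y, z, by omega, rfl⟩, a, by simp, by push_cast; ring⟩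

lemma mem_nfold_uz (a b : ℤ) (N : ℕ) (n : ℤ) :
    n ∈ nfold ({0, a, 2*a, b} : Finset ℤ) N ↔
      ∃ u z : ℕ, (u+1)/2 + z ≤ N ∧ n = u*a + z*b := by
  rw [mem_nfold_xyz]
  constructor
  · rintro ⟨x, y, z, h, rfl⟩
    exact ⟨x + 2*y, z, by omega, by push_cast; ring⟩
  · rintro ⟨u, z, h, rfl⟩
    refine ⟨u % 2, u / 2, z, by omega, ?_⟩
    have hu : ((u % 2 : ℕ) : ℤ) + 2*((u / 2 : ℕ) : ℤ) = (u : ℤ) := by omega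
    linear_combination (-a) * hu

lemma mem_nfold_image (b : ℤ) (A : Finset ℤ) (N : ℕ) (m : ℤ) :
    m ∈ nfold (A.image (fun x => b - x)) N ↔ b * N - m ∈ nfold A N := by
  induction N generalizing m with
  | zero =>
    simp only [nfold, Finset.mem_singleton, Nat.cast_zero, mul_zero, zero_sub, neg_eq_zero]
  | succ N ih =>
    rw [nfold, nfold, Finset.mem_add, Finset.mem_add]
    constructor
    · rintro ⟨t, ht, e, he, rfl⟩
      obtain ⟨x, hx, rfl⟩ := Finset.mem_image.mp he
      refine ⟨b*N - t, (ih _).mp ht, x, hx, ?_⟩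
      push_cast; ring
    · rintro ⟨s, hs, x, hx, hsum⟩
      refine ⟨b*N - s, (ih _).mpr (by rw [show b*(N:ℤ) - (b*N - s) = s by ring]; exact hs),
        b - x, Finset.mem_image_of_mem _ hx, ?_⟩
      push_cast at hsum ⊢; linarith

lemma mem_postP_A (a b : ℤ) (n : ℤ) :
    n ∈ postP ({0, a, 2*a, b} : Finset ℤ) ↔ ∃ u z : ℕ, n = u*a + z*b := by
  constructor
  · rintro ⟨M, hM, hmem⟩
    obtain ⟨u, z, _, rfl⟩ := (mem_nfold_uz a b M n).mp hmem
    exact ⟨u, z, rfl⟩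
  · rintro ⟨u, z, rfl⟩
    exact ⟨(u+1)/2 + z + 1, by omega, (mem_nfold_uz _ _ _ _).mpr ⟨u, z, by omega, rfl⟩⟩

theorem stmt13 (a b : ℤ) (h1 : 0 < a) (h2 : a < 2 * a) (h3 : 2 * a < b)
    (hgcd : Int.gcd a b = 1)
    (A : Finset ℤ) (hA : A = {0, a, 2 * a, b})
    (N : ℕ) (hN : 1 ≤ N) :
    (↑(nfold A N) : Set ℤ) =
      Set.Icc 0 (b * N) \
        (postE A ∪ (fun m => b * N - m) '' postE (A.image (fun x => b - x))) := by
  subst hA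
  have hb0 : (0:ℤ) < b := by linarith
  ext n
  simp only [Finset.coe_insert, Set.mem_diff, Set.mem_Icc, Set.mem_union, Set.mem_image,
    Finset.mem_coe, postE, Set.mem_setOf_eq]
  constructor
  · intro h
    obtain ⟨u, z, huz, hn⟩ := (mem_nfold_uz a b N n).mp h
    have hc : (((u+1)/2 : ℕ) : ℤ) + (z:ℤ) ≤ (N:ℤ) := by exact_mod_cast huz
    have hu2 : (u:ℤ) ≤ 2 * (((u+1)/2 : ℕ) : ℤ) := by
      have : u ≤ 2 * ((u+1)/2) := by omega
      exact_mod_cast this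
    have hc0 : (0:ℤ) ≤ (((u+1)/2 : ℕ) : ℤ) := Int.natCast_nonneg _
    refine ⟨⟨?_, ?_⟩, ?_⟩
    · rw [hn]; positivity
    · have t1 : (u:ℤ)*a ≤ 2*(((u+1)/2 : ℕ):ℤ)*a :=
        mul_le_mul_of_nonneg_right hu2 h1.le
      have t2 : (((u+1)/2 : ℕ):ℤ)*(2*a) ≤ (((u+1)/2 : ℕ):ℤ)*b :=
        mul_le_mul_of_nonneg_left h3.le hc0
      have t3 : ((((u+1)/2 : ℕ):ℤ) + z)*b ≤ (N:ℤ)*b :=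
        mul_le_mul_of_nonneg_right hc hb0.le
      rw [hn]; nlinarith
    · rintro (⟨hn1, hnp⟩ | ⟨m, ⟨hm1, hmp⟩, hmn⟩)
      · exact hnp ⟨N, hN, h⟩
      · refine hmp ⟨N, hN, (mem_nfold_image b _ N m).mpr ?_⟩
        rw [hmn]; exact h
  · rintro ⟨⟨hn0, hnN⟩, hnot⟩
    push_neg at hnot
    obtain ⟨hEA', hEB'⟩ := hnot
    have hEA : 1 ≤ n → n ∈ postP {0, a, 2*a, b} := hEA'
    have hEB : 1 ≤ b*(N:ℤ) - n → (b*(N:ℤ) - n) ∈ postP (({0, a, 2*a, b} : Finset ℤ).image (fun x => b - x)) := by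
      intro hh; by_contra hc
      exact hEB' (b*(N:ℤ) - n) ⟨hh, hc⟩ (by ring)
    rcases le_or_gt n 0 with hle | hpos
    · have : n = 0 := le_antisymm hle hn0
      exact (mem_nfold_uz a b N n).mpr ⟨0, 0, by omega, by simp [this]⟩
    rcases le_or_gt (b*(N:ℤ) - n) 0 with hle | hpos2
    · have : n = b*(N:ℤ) := by linarith
      refine (mem_nfold_uz a b N n).mpr ⟨0, N, by omega, ?_⟩
      push_cast
      linarith
    obtain ⟨u₁, z₁, hn1⟩ := (mem_postP_A a b n).mp (hEA hpos)
    obtain ⟨M, hM1, hMmem⟩ := hEB hpos2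
    obtain ⟨u₂, z₂, hc₂, heq⟩ :=
      (mem_nfold_uz a b M _).mp ((mem_nfold_image b _ M _).mp hMmem)
    -- heq : b*M - (b*N - n) = u₂*a + z₂*b
    set w : ℤ := (z₂:ℤ) + (N:ℤ) - (M:ℤ) with hw
    have hn2 : n = (u₂:ℤ)*a + w*b := by rw [hw]; linarith [heq]
    have hcw : (((u₂+1)/2 : ℕ) : ℤ) + w ≤ (N:ℤ) := by
      have : (((u₂+1)/2 : ℕ) : ℤ) + (z₂:ℤ) ≤ (M:ℤ) := by exact_mod_cast hc₂
      rw [hw]; linarith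
    by_cases hwpos : 0 ≤ w
    · refine (mem_nfold_uz a b N n).mpr ⟨u₂, w.toNat, ?_, ?_⟩
      · omega
      · rw [Int.toNat_of_nonneg hwpos]; exact hn2
    · push_neg at hwpos
      have key : ((u₂:ℤ) - u₁)*a = ((z₁:ℤ) - w)*b := by linarith [hn1, hn2]
      have hzw : 0 < (z₁:ℤ) - w := by
        have := Int.natCast_nonneg z₁; linarith
      have hdiff : 0 < (u₂:ℤ) - (u₁:ℤ) := by
        have h5 : 0 < ((u₂:ℤ) - u₁)*a := by rw [key]; exact mul_pos hzw hb0
        nlinarith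
      have hco : IsCoprime b a := by
        rw [Int.isCoprime_iff_gcd_eq_one, Int.gcd_comm]; exact hgcd
      have hdvd : b ∣ (u₂:ℤ) - u₁ :=
        hco.dvd_of_dvd_mul_right ⟨(z₁:ℤ) - w, by linarith [key]⟩
      obtain ⟨t, ht⟩ := hdvd
      have ht1 : 1 ≤ t := by
        by_contra hcon
        push_neg at hcon
        have hbt : b * t ≤ 0 := mul_nonpos_of_nonneg_of_nonpos hb0.le (by omega)
        linarith
      have hza : (z₁:ℤ) - w = t * a := by
        apply mul_left_cancel₀ (ne_of_gt hb0)
        linear_combination a * ht - key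
      refine (mem_nfold_uz a b N n).mpr ⟨u₁, z₁, ?_, hn1⟩
      have e1 : (u₂:ℤ) = (u₁:ℤ) + b*t := by linarith [ht]
      have e2 : (u₂:ℤ) ≤ 2*(((u₂+1)/2 : ℕ):ℤ) := by
        have : u₂ ≤ 2*((u₂+1)/2) := by omega
        exact_mod_cast this
      have e2' : 2*(((u₁+1)/2 : ℕ):ℤ) ≤ (u₁:ℤ) + 1 := by
        have : 2*((u₁+1)/2) ≤ u₁ + 1 := by omega
        exact_mod_cast this
      have e3 : 2*(t*a) + t ≤ b*t := by
        have hh := mul_nonneg (show (0:ℤ) ≤ b - 2*a - 1 by linarith) (show (0:ℤ) ≤ t by linarith)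
        nlinarith [hh]
      have hkey2 : (((u₁+1)/2 : ℕ):ℤ) + t*a ≤ (((u₂+1)/2 : ℕ):ℤ) := by linarith
      have hfin : (((u₁+1)/2 : ℕ):ℤ) + (z₁:ℤ) ≤ (N:ℤ) := by linarith
      exact_mod_cast hfin
end

section
/- Let A = {0, 2a−b, a, b} with 0 < 2a−b < a < b and gcd(a, b) = 1. Then for every N ≥ 1, NA = {0,1,...,bN} \ (E(A) ∪ (bN − E(b−A))). -/
open Pointwise

lemma nfold_char (p q r : ℤ) (N : ℕ) (n : ℤ) :
    n ∈ nfold ({0, p, q, r} : Finset ℤ) N ↔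
      ∃ x y z : ℕ, x + y + z ≤ N ∧ n = (x : ℤ) * p + y * q + z * r := by
  induction N generalizing n with
  | zero =>
    simp only [nfold, Finset.mem_singleton]
    constructor
    · rintro rfl; exact ⟨0, 0, 0, by omega, by push_cast; ring⟩
    · rintro ⟨x, y, z, hle, rfl⟩
      have hx : x = 0 := by omega
      have hy : y = 0 := by omega
      have hz : z = 0 := by omega
      subst hx hy hz; push_cast; ring
  | succ N ih =>
    show n ∈ nfold _ N + _ ↔ _
    rw [Finset.mem_add]
    constructor
    · rintro ⟨u, hu, v, hv, rfl⟩
      obtain ⟨x, y, z, hle, rfl⟩ := (ih _).1 hu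
      simp only [Finset.mem_insert, Finset.mem_singleton] at hv
      rcases hv with rfl | rfl | rfl | rfl
      · exact ⟨x, y, z, by omega, by ring⟩
      · exact ⟨x + 1, y, z, by omega, by push_cast; ring⟩
      · exact ⟨x, y + 1, z, by omega, by push_cast; ring⟩
      · exact ⟨x, y, z + 1, by omega, by push_cast; ring⟩
    · rintro ⟨x, y, z, hle, rfl⟩
      by_cases h : x + y + z ≤ N
      · exact ⟨(x : ℤ) * p + y * q + z * r, (ih _).2 ⟨x, y, z, h, rfl⟩, 0, by simp, by ring⟩
      · rcases Nat.lt_or_ge 0 x with hx | hx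
        · refine ⟨(x - 1 : ℕ) * p + y * q + z * r, (ih _).2 ⟨x - 1, y, z, by omega, rfl⟩, p,
            by simp, ?_⟩
          have : ((x - 1 : ℕ) : ℤ) = (x : ℤ) - 1 := by omega
          rw [this]; ring
        rcases Nat.lt_or_ge 0 y with hy | hy
        · refine ⟨x * p + (y - 1 : ℕ) * q + z * r, (ih _).2 ⟨x, y - 1, z, by omega, rfl⟩, q,
            by simp, ?_⟩
          have : ((y - 1 : ℕ) : ℤ) = (y : ℤ) - 1 := by omega
          rw [this]; ring
        · have hz : 0 < z := by omega
          refine ⟨x * p + y * q + (z - 1 : ℕ) * r, (ih _).2 ⟨x, y, z - 1, by omega, rfl⟩, r,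
            by simp, ?_⟩
          have : ((z - 1 : ℕ) : ℤ) = (z : ℤ) - 1 := by omega
          rw [this]; ring

lemma postP_char (p q r : ℤ) (n : ℤ) :
    n ∈ postP ({0, p, q, r} : Finset ℤ) ↔
      ∃ x y z : ℕ, n = (x : ℤ) * p + y * q + z * r := by
  constructor
  · rintro ⟨N, _, hn⟩
    obtain ⟨x, y, z, _, rfl⟩ := (nfold_char p q r N n).1 hn
    exact ⟨x, y, z, rfl⟩
  · rintro ⟨x, y, z, rfl⟩
    exact ⟨x + y + z + 1, by omega, (nfold_char p q r _ _).2 ⟨x, y, z, by omega, rfl⟩⟩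

theorem stmt14 (a b : ℤ) (h1 : 0 < 2 * a - b) (h2 : 2 * a - b < a) (h3 : a < b)
    (hgcd : Int.gcd a b = 1)
    (A : Finset ℤ) (hA : A = {0, 2 * a - b, a, b})
    (N : ℕ) (hN : 1 ≤ N) :
    (↑(nfold A N) : Set ℤ) =
      Set.Icc 0 (b * N) \
        (postE A ∪ (fun m => b * N - m) '' postE (A.image (fun x => b - x))) := by
  subst hA
  have ha : 0 < a := by linarith
  have hb : 0 < b := by linarith
  have hba : (0 : ℤ) < b - a := by linarith
  have hB : ({0, 2*a-b, a, b} : Finset ℤ).image (fun x => b - x) = {0, b - a, 2*b - 2*a, b} := by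
    ext x
    simp only [Finset.mem_image, Finset.mem_insert, Finset.mem_singleton]
    constructor
    · rintro ⟨y, hy, rfl⟩; omega
    · intro h
      rcases h with rfl | rfl | rfl | rfl
      · exact ⟨b, by omega⟩
      · exact ⟨a, by omega⟩
      · exact ⟨2*a-b, by omega⟩
      · exact ⟨0, by omega⟩
  rw [hB]
  ext n
  simp only [Finset.coe_sort_coe, Finset.mem_coe, Set.mem_diff, Set.mem_Icc, Set.mem_union,
    Set.mem_image, not_or, not_exists]
  constructor
  · intro hn
    obtain ⟨x, y, z, hle, hrep⟩ := (nfold_char _ _ _ N n).1 hn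
    have hx0 : (0:ℤ) ≤ x := Int.natCast_nonneg x
    have hy0 : (0:ℤ) ≤ y := Int.natCast_nonneg y
    have hz0 : (0:ℤ) ≤ z := Int.natCast_nonneg z
    have hcast : (x:ℤ) + y + z ≤ N := by exact_mod_cast hle
    refine ⟨⟨?_, ?_⟩, ?_, ?_⟩
    · nlinarith [mul_nonneg hx0 h1.le, mul_nonneg hy0 ha.le, mul_nonneg hz0 hb.le]
    · nlinarith [mul_nonneg hx0 (by linarith : (0:ℤ) ≤ 2*b - 2*a),
        mul_nonneg hy0 hba.le,
        mul_nonneg (by linarith : (0:ℤ) ≤ (N:ℤ) - x - y - z) hb.le]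
    · rintro ⟨_, hnp⟩
      exact hnp ⟨N, hN, hn⟩
    · rintro m ⟨hmne, heq⟩
      refine hmne.2 ((postP_char _ _ _ m).2 ⟨y, x, N - x - y - z, ?_⟩)
      have hsub : ((N - x - y - z : ℕ) : ℤ) = (N:ℤ) - x - y - z := by
        omega
      rw [hsub]
      linarith
  · rintro ⟨⟨hn0, hnN⟩, hnE, himg⟩
    rcases eq_or_lt_of_le hn0 with rfl | hn1
    · exact (nfold_char _ _ _ N 0).2 ⟨0, 0, 0, by omega, by push_cast; ring⟩
    have hP : (n : ℤ) ∈ postP ({0, 2*a-b, a, b} : Finset ℤ) := by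
      by_contra h
      exact hnE ⟨hn1, h⟩
    obtain ⟨x₁, y₁, z₁, hrep1⟩ := (postP_char _ _ _ n).1 hP
    rcases eq_or_lt_of_le hnN with rfl | hn2
    · exact (nfold_char _ _ _ N _).2 ⟨0, 0, N, by omega, by push_cast; ring⟩
    have hQ : b * N - n ∈ postP ({0, b - a, 2*b - 2*a, b} : Finset ℤ) := by
      by_contra h
      exact himg (b * N - n) ⟨⟨by linarith, h⟩, by ring⟩
    obtain ⟨x₂, y₂, z₂, hrep2⟩ := (postP_char _ _ _ _).1 hQ
    obtain ⟨t₁, w₁, ht₁0, hg1, hn1'⟩ :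
        ∃ t₁ w₁ : ℤ, 0 ≤ t₁ ∧ 0 ≤ t₁ + 2 * w₁ ∧ n = t₁ * a + w₁ * b := by
      refine ⟨2*(x₁:ℤ) + y₁, (z₁:ℤ) - x₁, by positivity, ?_, by linear_combination hrep1⟩
      have hy : (0:ℤ) ≤ y₁ := Int.natCast_nonneg _
      have hz : (0:ℤ) ≤ z₁ := Int.natCast_nonneg _
      linarith
    obtain ⟨u, v, hu0, hv0, hn2'⟩ :
        ∃ u v : ℤ, 0 ≤ u ∧ 0 ≤ v ∧ n = u * a + ((N:ℤ) - u - v) * b :=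
      ⟨(x₂:ℤ) + 2*y₂, z₂, by positivity, Int.natCast_nonneg _, by linear_combination -hrep2⟩
    have hcop : IsCoprime (b : ℤ) a := (Int.isCoprime_iff_gcd_eq_one.2 hgcd).symm
    have hb0 : b ≠ 0 := by linarith
    have hdvd : b ∣ (u - t₁) :=
      hcop.dvd_of_dvd_mul_right ⟨w₁ - (N:ℤ) + u + v, by linear_combination hn1' - hn2'⟩
    obtain ⟨k, hk⟩ := hdvd
    have hw2 : (N:ℤ) - u - v = w₁ - k * a := by
      have hmul : ((N:ℤ) - u - v) * b = (w₁ - k * a) * b := by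
        linear_combination hn1' - hn2' - a * hk
      exact mul_right_cancel₀ hb0 hmul
    obtain ⟨J, hJdef⟩ : ∃ J : ℤ, J = ((N:ℤ) - t₁ - w₁) / (b - a) := ⟨_, rfl⟩
    have hkJ : k ≤ J := by
      rw [hJdef]
      refine (Int.le_ediv_iff_mul_le hba).2 ?_
      have hkey : k * (b - a) = (N:ℤ) - t₁ - w₁ - v := by linear_combination -hk - hw2
      linarith
    obtain ⟨j, hjdef⟩ : ∃ j : ℤ, j = min 0 J := ⟨_, rfl⟩
    have hj0 : j ≤ 0 := hjdef ▸ min_le_left _ _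
    have hjJ : j ≤ J := hjdef ▸ min_le_right _ _
    have hfle : (t₁ + j * b) + (w₁ - j * a) ≤ N := by
      have h1' : J * (b - a) ≤ (N:ℤ) - t₁ - w₁ := by
        rw [hJdef]; exact Int.ediv_mul_le _ (by linarith)
      have h2' : j * (b - a) ≤ J * (b - a) := mul_le_mul_of_nonneg_right hjJ (by linarith)
      have hexp : (t₁ + j * b) + (w₁ - j * a) = t₁ + w₁ + j * (b - a) := by ring
      rw [hexp]; linarith
    have ht0 : 0 ≤ t₁ + j * b := by
      rcases le_or_gt 0 k with hk0 | hk0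
      · have hjz : j = 0 := le_antisymm hj0 (hjdef ▸ le_min le_rfl (le_trans hk0 hkJ))
        rw [hjz]; simpa using ht₁0
      · have hjk : k ≤ j := hjdef ▸ le_min hk0.le hkJ
        have hkb : k * b ≤ j * b := mul_le_mul_of_nonneg_right hjk hb.le
        have hu' : t₁ + k * b = u := by linear_combination -hk
        linarith
    have hg : 0 ≤ (t₁ + j * b) + 2 * (w₁ - j * a) := by
      have hjn : 0 ≤ (-j) * (2 * a - b) := mul_nonneg (by linarith) (by linarith)
      have hexp : (t₁ + j * b) + 2 * (w₁ - j * a) = t₁ + 2 * w₁ + (-j) * (2 * a - b) := by ring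
      rw [hexp]; linarith
    have hnw : n = (t₁ + j * b) * a + (w₁ - j * a) * b := by linear_combination hn1'
    rcases le_or_gt 0 (w₁ - j * a) with hw0 | hw0
    · refine (nfold_char _ _ _ N n).2
        ⟨0, (t₁ + j * b).toNat, (w₁ - j * a).toNat, by omega, ?_⟩
      push_cast [Int.toNat_of_nonneg ht0, Int.toNat_of_nonneg hw0]
      linarith [hnw]
    · refine (nfold_char _ _ _ N n).2
        ⟨(-(w₁ - j * a)).toNat, ((t₁ + j * b) + 2 * (w₁ - j * a)).toNat, 0, by omega, ?_⟩
      push_cast [Int.toNat_of_nonneg (by linarith : (0:ℤ) ≤ -(w₁ - j * a)),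
        Int.toNat_of_nonneg hg]
      linear_combination hnw
end

section
/- Let b be even and A = {0, a, b/2, b} with 0 < a < b, a ≠ b/2 and gcd(a, b/2) = 1. Then for every N ≥ 1, NA = {0,1,...,bN} \ (E(A) ∪ (bN − E(b−A))). -/
open Pointwise

lemma mem_nfold (a m : ℤ) (N : ℕ) (n : ℤ) :
    n ∈ nfold ({0, a, m, 2*m} : Finset ℤ) N ↔
      ∃ i j : ℕ, 2*i + j ≤ 2*N ∧ n = i*a + j*m := by
  induction N generalizing n with
  | zero =>
    simp only [nfold, Finset.mem_singleton]
    constructor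
    · rintro rfl; exact ⟨0, 0, by simp⟩
    · rintro ⟨i, j, hij, rfl⟩
      have hi : i = 0 := by omega
      have hj : j = 0 := by omega
      subst hi; subst hj; simp
  | succ N ih =>
    simp only [nfold, Finset.mem_add]
    constructor
    · rintro ⟨x, hx, y, hy, rfl⟩
      obtain ⟨i, j, hij, rfl⟩ := (ih _).mp hx
      simp only [Finset.mem_insert, Finset.mem_singleton] at hy
      rcases hy with rfl | rfl | rfl | rfl
      · exact ⟨i, j, by omega, by ring⟩
      · exact ⟨i + 1, j, by omega, by push_cast; ring⟩
      · exact ⟨i, j + 1, by omega, by push_cast; ring⟩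
      · exact ⟨i, j + 2, by omega, by push_cast; ring⟩
    · rintro ⟨i, j, hij, rfl⟩
      match i, j with
      | i + 1, j =>
        refine ⟨(i : ℤ) * a + (j : ℤ) * m, (ih _).mpr ⟨i, j, by omega, rfl⟩, a, by simp, ?_⟩
        push_cast; ring
      | 0, j + 2 =>
        refine ⟨(0 : ℤ) * a + (j : ℤ) * m, (ih _).mpr ⟨0, j, by omega, rfl⟩, 2*m, by simp, ?_⟩
        push_cast; ring
      | 0, 1 =>
        refine ⟨(0 : ℤ) * a + (0 : ℤ) * m, (ih _).mpr ⟨0, 0, by omega, rfl⟩, m, by simp, ?_⟩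
        push_cast; ring
      | 0, 0 =>
        refine ⟨(0 : ℤ) * a + (0 : ℤ) * m, (ih _).mpr ⟨0, 0, by omega, rfl⟩, 0, by simp, ?_⟩
        push_cast; ring

lemma mem_postP (a m : ℤ) (n : ℤ) :
    n ∈ postP ({0, a, m, 2*m} : Finset ℤ) ↔ ∃ i j : ℕ, n = i*a + j*m := by
  constructor
  · rintro ⟨N, _, hn⟩
    obtain ⟨i, j, _, rfl⟩ := (mem_nfold a m N n).mp hn
    exact ⟨i, j, rfl⟩
  · rintro ⟨i, j, rfl⟩
    exact ⟨i + j + 1, by omega, (mem_nfold a m _ _).mpr ⟨i, j, by omega, rfl⟩⟩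

lemma key (a m : ℤ) (h1 : 0 < a) (h2 : a < 2*m) (hg : Int.gcd a m = 1)
    (N : ℕ) (i j i₁ j₁ : ℕ) (n : ℤ)
    (hn : n = i*a + j*m)
    (he : 2*m*N - n = i₁*(2*m-a) + j₁*m) :
    ∃ i₀ j₀ : ℕ, 2*i₀ + j₀ ≤ 2*N ∧ n = i₀*a + j₀*m := by
  have hm : 0 < m := by omega
  set I : ℤ := (i : ℤ) % m with hI
  set t : ℤ := (i : ℤ) / m with ht
  have hI0 : 0 ≤ I := Int.emod_nonneg _ (by omega)
  have hIm : I < m := Int.emod_lt_of_pos _ hm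
  have ht0 : 0 ≤ t := Int.ediv_nonneg (by positivity) hm.le
  have hit : (i : ℤ) = I + t * m := by
    conv_lhs => rw [← Int.emod_add_mul_ediv (i:ℤ) m]
    rw [hI, ht]; ring
  have hJ0 : 0 ≤ (j : ℤ) + t * a := by positivity
  have hn' : n = I * a + ((j : ℤ) + t * a) * m := by rw [hn, hit]; ring
  -- coprimality step
  have hco : IsCoprime a m := Int.isCoprime_iff_gcd_eq_one.mpr hg
  have hdvd : m ∣ a * (I - i₁) := by
    refine ⟨2*N - ((j:ℤ) + t*a) - j₁ - 2*(i₁:ℤ), ?_⟩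
    have := he
    rw [hn'] at this
    linarith [this]
  have hdvd2 : m ∣ (I - i₁) := (hco.symm.dvd_of_dvd_mul_left hdvd)
  obtain ⟨s, hs⟩ : ∃ s : ℤ, (i₁ : ℤ) = I + s * m := by
    obtain ⟨c, hc⟩ := hdvd2
    exact ⟨-c, by linarith⟩
  have hs0 : 0 ≤ s := by nlinarith [Int.natCast_nonneg i₁]
  -- cancel m
  have hmain : 2 * I + ((j:ℤ) + t*a) + (j₁ : ℤ) + s * (2*m - a) = 2 * N := by
    have h := he
    rw [hn', hs] at h
    have : m * (2 * I + ((j:ℤ) + t*a) + (j₁ : ℤ) + s * (2*m - a)) = m * (2 * N) := by ring_nf; ring_nf at h; linarith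
    exact mul_left_cancel₀ (by omega) this
  have hbound : 2 * I + ((j:ℤ) + t*a) ≤ 2 * N := by nlinarith [Int.natCast_nonneg j₁]
  refine ⟨I.toNat, ((j:ℤ) + t*a).toNat, by omega, ?_⟩
  rw [Int.toNat_of_nonneg hI0, Int.toNat_of_nonneg hJ0]
  exact hn'

theorem stmt15 (a b m : ℤ) (hbm : b = 2 * m)
    (h1 : 0 < a) (h2 : a < b) (h3 : a ≠ m)
    (hgcd : Int.gcd a m = 1)
    (A : Finset ℤ) (hA : A = {0, a, m, b})
    (N : ℕ) (hN : 1 ≤ N) :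
    (↑(nfold A N) : Set ℤ) =
      Set.Icc 0 (b * N) \
        (postE A ∪ (fun m => b * N - m) '' postE (A.image (fun x => b - x))) := by
  subst hbm; subst hA
  have hm : 0 < m := by omega
  have hB : (({0, a, m, 2*m} : Finset ℤ).image (fun x => 2*m - x)) =
      ({0, 2*m - a, m, 2*m} : Finset ℤ) := by
    ext x
    simp only [Finset.mem_image, Finset.mem_insert, Finset.mem_singleton]
    constructor
    · rintro ⟨y, hy, rfl⟩
      rcases hy with rfl | rfl | rfl | rfl <;> omega
    · rintro (hx | hx | hx | hx)
      · exact ⟨2*m, by simp, by omega⟩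
      · exact ⟨a, by simp, by omega⟩
      · exact ⟨m, by simp, by omega⟩
      · exact ⟨0, by simp, by omega⟩
  have hgcd' : Int.gcd (2*m - a) m = 1 := by
    have hc : IsCoprime a m := Int.isCoprime_iff_gcd_eq_one.mpr hgcd
    have h2 := (hc.neg_left.add_mul_left_left 2)
    rw [show -a + m * 2 = 2*m - a by ring] at h2
    exact Int.isCoprime_iff_gcd_eq_one.mp h2
  ext n
  simp only [Finset.coe_sort_coe, Finset.mem_coe, Set.mem_diff, Set.mem_Icc, Set.mem_union,
    Set.mem_image, not_or, not_exists, hB]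
  rw [mem_nfold]
  constructor
  · rintro ⟨i, j, hij, rfl⟩
    have hi0 : (0:ℤ) ≤ i := Int.natCast_nonneg i
    have hj0 : (0:ℤ) ≤ j := Int.natCast_nonneg j
    have hijZ : 2*(i:ℤ) + (j:ℤ) ≤ 2*(N:ℤ) := by exact_mod_cast hij
    refine ⟨⟨by positivity, by nlinarith⟩, ?_, ?_⟩
    · intro hE
      exact hE.2 ((mem_postP a m _).mpr ⟨i, j, rfl⟩)
    · rintro e ⟨⟨heA, heB⟩, heq⟩
      apply heB
      rw [mem_postP (2*m - a) m]
      refine ⟨i, (2*N - (2*i + j) : ℕ), ?_⟩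
      push_cast [Nat.cast_sub (by omega : 2*i + j ≤ 2*N)]
      linear_combination -heq
  · rintro ⟨⟨h0n, hn2⟩, hnE, hnI⟩
    obtain ⟨i, j, hn⟩ : ∃ i j : ℕ, n = i*a + j*m := by
      rcases eq_or_lt_of_le h0n with h | h
      · exact ⟨0, 0, by simp [← h]⟩
      · rcases (not_and_or.mp hnE) with h' | h'
        · omega
        · rw [not_not, mem_postP a m] at h'
          exact h'
    obtain ⟨i₁, j₁, he⟩ : ∃ i₁ j₁ : ℕ, 2*m*N - n = i₁*(2*m - a) + j₁*m := by
      rcases eq_or_lt_of_le hn2 with h | h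
      · exact ⟨0, 0, by simp [h]⟩
      · have hne : ¬ (2*m*N - n) ∈ postE ({0, 2*m-a, m, 2*m} : Finset ℤ) := by
          intro hE
          exact hnI _ ⟨hE, by ring⟩
        rcases (not_and_or.mp hne) with h' | h'
        · omega
        · rw [not_not, mem_postP (2*m-a) m] at h'
          exact h'
    obtain ⟨i₀, j₀, hb, hval⟩ := key a m h1 (by omega) hgcd N i j i₁ j₁ n hn he
    exact ⟨i₀, j₀, hb, hval⟩
end

section
/- Let A = {0, h, b−h, b} with 0 < h < b−h < b and gcd(h, b) = 1. Then for every N ≥ b − 1 − h, NA = {0,1,...,bN} \ (E(A) ∪ (bN − E(b−A))). -/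
open Pointwise

lemma mem_nfold_iff_s16 (h b : ℤ) (h1 : 0 < h) (h2 : h < b - h) (N : ℕ) (x : ℤ) :
    x ∈ nfold ({0, h, b - h, b} : Finset ℤ) N ↔
      ∃ s t : ℤ, 0 ≤ t ∧ -s ≤ t ∧ max s 0 + t ≤ (N : ℤ) ∧ x = s * h + t * b := by
  induction N generalizing x with
  | zero =>
    simp only [nfold, Finset.mem_singleton, Nat.cast_zero]
    constructor
    · rintro rfl; exact ⟨0, 0, by norm_num⟩
    · rintro ⟨s, t, ht, hst, hle, rfl⟩
      have hs : s = 0 ∧ t = 0 := by omega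
      rw [hs.1, hs.2]; ring
  | succ n ih =>
    show x ∈ nfold _ n + _ ↔ _
    rw [Finset.mem_add]
    constructor
    · rintro ⟨y, hy, a, ha, rfl⟩
      obtain ⟨s, t, ht, hst, hle, rfl⟩ := ih y |>.mp hy
      simp only [Finset.mem_insert, Finset.mem_singleton] at ha
      push_cast
      rcases ha with rfl | rfl | rfl | rfl
      · exact ⟨s, t, ht, hst, by omega, by ring⟩
      · exact ⟨s + 1, t, ht, by omega, by omega, by ring⟩
      · exact ⟨s - 1, t + 1, by omega, by omega, by omega, by ring⟩
      · exact ⟨s, t + 1, by omega, by omega, by omega, by ring⟩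
    · rintro ⟨s, t, ht, hst, hle, rfl⟩
      push_cast at hle
      by_cases hcase : max s 0 + t ≤ (n : ℤ)
      · refine ⟨s * h + t * b, (ih _).mpr ⟨s, t, ht, hst, hcase, rfl⟩, 0, by simp, by ring⟩
      · have heq : max s 0 + t = (n : ℤ) + 1 := by omega
        rcases le_or_gt 1 s with hs1 | hs1
        · refine ⟨(s - 1) * h + t * b, (ih _).mpr ⟨s - 1, t, ht, by omega, by omega, rfl⟩,
            h, by simp, by ring⟩
        · have ht1 : t = (n : ℤ) + 1 := by omega
          rcases le_or_gt (-s) (t - 1) with hc | hc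
          · refine ⟨s * h + (t - 1) * b, (ih _).mpr ⟨s, t - 1, by omega, hc, by omega, rfl⟩,
              b, by simp, by ring⟩
          · refine ⟨(s + 1) * h + (t - 1) * b,
              (ih _).mpr ⟨s + 1, t - 1, by omega, by omega, by omega, rfl⟩,
              b - h, by simp, by ring⟩

lemma mem_postP_iff (h b : ℤ) (h1 : 0 < h) (h2 : h < b - h) (x : ℤ) :
    x ∈ postP ({0, h, b - h, b} : Finset ℤ) ↔
      ∃ s t : ℤ, 0 ≤ t ∧ -s ≤ t ∧ x = s * h + t * b := by
  constructor
  · rintro ⟨N, _, hmem⟩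
    obtain ⟨s, t, ht, hst, _, hx⟩ := (mem_nfold_iff_s16 h b h1 h2 N x).mp hmem
    exact ⟨s, t, ht, hst, hx⟩
  · rintro ⟨s, t, ht, hst, hx⟩
    refine ⟨(max s 0 + t).toNat + 1, by omega, (mem_nfold_iff_s16 h b h1 h2 _ x).mpr
      ⟨s, t, ht, hst, ?_, hx⟩⟩
    push_cast
    omega

lemma image_sub_eq (h b : ℤ) :
    (({0, h, b - h, b} : Finset ℤ).image (fun x => b - x)) = ({0, h, b - h, b} : Finset ℤ) := by
  have himg : (({0, h, b - h, b} : Finset ℤ).image (fun x => b - x))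
      = {b - 0, b - h, b - (b - h), b - b} := by
    simp [Finset.image_insert]
  rw [himg]
  ext a
  simp only [Finset.mem_insert, Finset.mem_singleton]
  omega

lemma keyrep (h b : ℤ) (h1 : 0 < h) (h2 : h < b - h)
    (s t x : ℤ) (ht0 : 0 ≤ t) (hts : -s ≤ t) (hx : x = s * h + t * b) :
    ∃ r τ : ℤ, 0 ≤ r ∧ r < b ∧ x = r * h + τ * b ∧ (0 ≤ τ ∨ b - h - r ≤ τ) := by
  have hb : 0 < b := by omega
  refine ⟨s % b, t + (s / b) * h, Int.emod_nonneg s hb.ne', Int.emod_lt_of_pos s hb, ?_, ?_⟩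
  · have hs : b * (s / b) + s % b = s := Int.mul_ediv_add_emod s b
    linear_combination hx - h * hs
  · rcases le_or_gt 0 (s / b) with hq0 | hq0
    · left
      have := mul_nonneg hq0 h1.le
      linarith
    · right
      have hs : b * (s / b) + s % b = s := Int.mul_ediv_add_emod s b
      have h1q : (1 : ℤ) ≤ -(s / b) := by omega
      have : (b - h) * 1 ≤ (b - h) * (-(s / b)) :=
        mul_le_mul_of_nonneg_left h1q (by linarith)
      nlinarith [hts]

lemma key_s16 (h b : ℤ) (h1 : 0 < h) (h2 : h < b - h) (hgcd : Int.gcd h b = 1)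
    (N : ℤ) (hN : b - 1 - h ≤ N)
    (x s t s' t' : ℤ)
    (ht0 : 0 ≤ t) (hts : -s ≤ t) (hx : x = s * h + t * b)
    (ht0' : 0 ≤ t') (hts' : -s' ≤ t') (hx' : b * N - x = s' * h + t' * b) :
    ∃ σ τ : ℤ, 0 ≤ τ ∧ -σ ≤ τ ∧ max σ 0 + τ ≤ N ∧ x = σ * h + τ * b := by
  have hb : 0 < b := by omega
  obtain ⟨r, τ, hr0, hrb, hxr, Dx⟩ := keyrep h b h1 h2 s t x ht0 hts hx
  obtain ⟨r', τ', hr0', hrb', hxr', Dy⟩ := keyrep h b h1 h2 s' t' (b * N - x) ht0' hts' hx'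
  clear hx hx' hts hts' ht0 ht0'
  have hsum : (r + r') * h + (τ + τ') * b = b * N := by linear_combination -hxr - hxr'
  have hdvd : b ∣ (r + r') * h := ⟨N - τ - τ', by linarith⟩
  have hco : IsCoprime b h := by
    rw [Int.isCoprime_iff_gcd_eq_one, Int.gcd_comm]; exact hgcd
  obtain ⟨c, hc⟩ := hco.dvd_of_dvd_mul_right hdvd
  have hc0 : 0 ≤ c := by
    by_contra hneg
    have h1c : c ≤ -1 := by omega
    have : b * c ≤ b * (-1) := mul_le_mul_of_nonneg_left h1c hb.le
    omega
  have hc2 : c < 2 := by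
    by_contra hge
    have h2c : 2 ≤ c := by omega
    have : b * 2 ≤ b * c := mul_le_mul_of_nonneg_left h2c hb.le
    omega
  interval_cases c
  · have hre : r = 0 := by omega
    have hre' : r' = 0 := by omega
    have hτ0 : 0 ≤ τ := by rcases Dx with h' | h' <;> omega
    have hτ0' : 0 ≤ τ' := by rcases Dy with h' | h' <;> omega
    have hττ : τ + τ' = N := by
      have hz : r + r' = 0 := by omega
      have hh : (τ + τ') * b = N * b := by
        linear_combination hsum - h * hz
      exact mul_right_cancel₀ hb.ne' hh
    exact ⟨0, τ, hτ0, by omega, by simp; omega, by rw [hxr, hre]⟩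
  · have hrr : r + r' = b := by omega
    have hr1 : 1 ≤ r := by omega
    have hr1' : 1 ≤ r' := by omega
    have hττ : τ + τ' = N - h := by
      have hh : (τ + τ') * b = (N - h) * b := by linear_combination hsum - h * hrr
      exact mul_right_cancel₀ hb.ne' hh
    rcases lt_or_ge τ 0 with hτneg | hτ0
    · have hDx : b - h - r ≤ τ := by rcases Dx with h' | h' <;> omega
      refine ⟨r - b, τ + h, by omega, by omega, ?_, by rw [hxr]; ring⟩
      have hm : max (r - b) 0 = 0 := by omega
      rw [hm]; omega
    · rcases le_or_gt (b - h - r) τ with hDx | hDx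
      · rcases lt_or_ge τ' 0 with hτ'neg | hτ'0
        · have hDy : b - h - r' ≤ τ' := by rcases Dy with h' | h' <;> omega
          refine ⟨r, τ, hτ0, by omega, ?_, hxr⟩
          have hm : max r 0 = r := by omega
          rw [hm]; omega
        · refine ⟨r - b, τ + h, by omega, by omega, ?_, by rw [hxr]; ring⟩
          have hm : max (r - b) 0 = 0 := by omega
          rw [hm]; omega
      · refine ⟨r, τ, hτ0, by omega, ?_, hxr⟩
        have hm : max r 0 = r := by omega
        rw [hm]; omega

theorem stmt16 (h b : ℤ) (h1 : 0 < h) (h2 : h < b - h) (h3 : b - h < b)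
    (hgcd : Int.gcd h b = 1)
    (A : Finset ℤ) (hA : A = {0, h, b - h, b})
    (N : ℕ) (hN : b - 1 - h ≤ (N : ℤ)) :
    (↑(nfold A N) : Set ℤ) =
      Set.Icc 0 (b * N) \
        (postE A ∪ (fun m => b * N - m) '' postE (A.image (fun x => b - x))) := by
  subst hA
  have hb : 0 < b := by omega
  have hN1 : 1 ≤ N := by
    have : (1 : ℤ) ≤ (N : ℤ) := by omega
    exact_mod_cast this
  rw [image_sub_eq h b]
  ext x
  simp only [Finset.coe_sort_coe, Set.mem_diff, Set.mem_Icc, Set.mem_union, Set.mem_image,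
    Finset.mem_coe]
  rw [mem_nfold_iff_s16 h b h1 h2]
  constructor
  · rintro ⟨s, t, ht0, hts, hle, rfl⟩
    have hxpos : 0 ≤ s * h + t * b := by
      rcases le_or_gt 0 s with hs | hs
      · have e1 : 0 ≤ s * h := mul_nonneg hs h1.le
        have e2 : 0 ≤ t * b := mul_nonneg ht0 hb.le
        linarith
      · have e1 : 0 ≤ (-s) * (b - h) := mul_nonneg (by omega) (by omega)
        have e2 : 0 ≤ (t + s) * b := mul_nonneg (by omega) hb.le
        nlinarith
    have hxle : s * h + t * b ≤ b * N := by
      rcases le_or_gt 0 s with hs | hs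
      · have hm : s ⊔ 0 = s := max_eq_left hs
        rw [hm] at hle
        have e1 : s * h ≤ s * b := mul_le_mul_of_nonneg_left (by omega) hs
        have e2 : (s + t) * b ≤ (N : ℤ) * b := mul_le_mul_of_nonneg_right (by omega) hb.le
        nlinarith
      · have hm : s ⊔ 0 = 0 := max_eq_right hs.le
        rw [hm] at hle
        have e1 : s * h ≤ 0 := mul_nonpos_iff.mpr (Or.inr ⟨hs.le, h1.le⟩)
        have e2 : t * b ≤ (N : ℤ) * b := mul_le_mul_of_nonneg_right (by omega) hb.le
        nlinarith
    have hP : s * h + t * b ∈ postP ({0, h, b - h, b} : Finset ℤ) := by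
      rw [mem_postP_iff h b h1 h2]
      exact ⟨s, t, ht0, hts, rfl⟩
    have hP' : b * N - (s * h + t * b) ∈ postP ({0, h, b - h, b} : Finset ℤ) := by
      rw [mem_postP_iff h b h1 h2]
      exact ⟨-s, (N : ℤ) - t, by omega, by omega, by ring⟩
    refine ⟨⟨hxpos, hxle⟩, ?_⟩
    rintro (⟨_, hnP⟩ | ⟨m, ⟨hm1, hmnP⟩, hm⟩)
    · exact hnP hP
    · have : m = b * N - (s * h + t * b) := by omega
      rw [this] at hmnP
      exact hmnP hP'
  · rintro ⟨⟨hx0, hxN⟩, hnot⟩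
    push_neg at hnot
    obtain ⟨hnE, hnE'⟩ := hnot
    rcases eq_or_lt_of_le hx0 with hx0' | hx0'
    · exact ⟨0, 0, le_refl 0, by omega, by omega, by rw [← hx0']; ring⟩
    rcases eq_or_lt_of_le hxN with hxN' | hxN'
    · exact ⟨0, N, by omega, by omega, by omega, by rw [hxN']; ring⟩
    have hxP : x ∈ postP ({0, h, b - h, b} : Finset ℤ) := by
      by_contra hcon
      exact (show x ∉ postE _ from hnE) ⟨by omega, hcon⟩
    have hxP' : b * N - x ∈ postP ({0, h, b - h, b} : Finset ℤ) := by
      by_contra hcon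
      have hmem : b * N - x ∈ postE ({0, h, b - h, b} : Finset ℤ) := ⟨by omega, hcon⟩
      exact absurd (by omega : b * N - (b * N - x) = x) (by
        intro heq
        exact absurd heq (hnE' (b * N - x) hmem))
    obtain ⟨s, t, ht0, hts, hx⟩ := (mem_postP_iff h b h1 h2 x).mp hxP
    obtain ⟨s', t', ht0', hts', hx'⟩ := (mem_postP_iff h b h1 h2 _).mp hxP'
    obtain ⟨σ, τ, hτ0, hστ, hle, hxe⟩ :=
      key_s16 h b h1 h2 hgcd (N : ℤ) hN x s t s' t' ht0 hts hx ht0' hts' hx'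
    exact ⟨σ, τ, hτ0, hστ, hle, hxe⟩
end
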